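/- arXiv:2111.13199 — 2 statements merged into one kernel-verified Lean document; each statement's English description precedes it below -/
import Mathlib

section
/- Let n ≥ 2 and let A be a Young function satisfying condition (δ) with exponents 1 < p⁻ ≤ p⁺ < n, conditions (A2) and (A3), and p⁺ < (p⁻)_* = np⁻/(n−p⁻). Let A_n = A ∘ H⁻¹ be the Orlicz–Sobolev conjugate of A, let M_n(t) = M(t, A_n) be the Matuszewska–Orlicz function of A_n, and let A_∞(t) = max{t^{p⁺}, t^{p⁻}}. Then A_∞ ≪ M_n, that is, for every c > 0, lim_{t→∞} A_∞(ct)/M_n(t) = 0. -/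
open MeasureTheory Filter Set

noncomputable section

/-- `A` is a Young function with density `a`. -/
def IsYoungPair (a A : ℝ → ℝ) : Prop :=
  a 0 = 0 ∧ (∀ s, 0 < s → 0 < a s) ∧
  (∀ s, 0 ≤ s → ContinuousWithinAt a (Set.Ici s) s) ∧
  MonotoneOn a (Set.Ioi 0) ∧
  ∀ t, 0 ≤ t → A t = ∫ τ in (0:ℝ)..t, a τ

/-- The function `H(t) = (∫₀ᵗ (τ/A(τ))^{1/(n-1)} dτ)^{(n-1)/n}`. -/
def Hfun (A : ℝ → ℝ) (n : ℕ) (t : ℝ) : ℝ :=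
  (∫ τ in (0:ℝ)..t, (τ / A τ) ^ ((1:ℝ) / ((n:ℝ) - 1))) ^ (((n:ℝ) - 1) / (n:ℝ))

/-- The Matuszewska–Orlicz function of `N`: `M(t,N) = limsup_{s→∞} N(st)/N(s)`. -/
def matus (N : ℝ → ℝ) (t : ℝ) : ℝ :=
  Filter.limsup (fun s => N (s * t) / N s) Filter.atTop

open intervalIntegral

section basics
variable {a A : ℝ → ℝ}

lemma a_monoIcc (ha0 : a 0 = 0) (hap : ∀ s, 0 < s → 0 < a s)
    (ham : MonotoneOn a (Set.Ioi 0)) (x : ℝ) : MonotoneOn a (Set.Icc 0 x) := by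
  intro s hs t ht hst
  rcases eq_or_lt_of_le hs.1 with h0 | h0
  · rcases eq_or_lt_of_le (h0 ▸ hst : (0:ℝ) ≤ t) with h1 | h1
    · rw [← h0, ← h1]
    · rw [← h0, ha0]; exact (hap t h1).le
  · exact ham h0 (lt_of_lt_of_le h0 hst) hst

lemma a_intInt (ha0 : a 0 = 0) (hap : ∀ s, 0 < s → 0 < a s)
    (ham : MonotoneOn a (Set.Ioi 0)) {u v : ℝ} (hu : 0 ≤ u) (huv : u ≤ v) :
    IntervalIntegrable a volume u v := by
  apply MonotoneOn.intervalIntegrable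
  refine (a_monoIcc ha0 hap ham v).mono ?_
  rw [Set.uIcc_of_le huv]
  exact Set.Icc_subset_Icc hu le_rfl

lemma A_sub (ha0 : a 0 = 0) (hap : ∀ s, 0 < s → 0 < a s)
    (ham : MonotoneOn a (Set.Ioi 0)) (hAint : ∀ t, 0 ≤ t → A t = ∫ τ in (0:ℝ)..t, a τ)
    {u v : ℝ} (hu : 0 ≤ u) (huv : u ≤ v) :
    A v = A u + ∫ τ in u..v, a τ := by
  rw [hAint u hu, hAint v (hu.trans huv)]
  rw [integral_add_adjacent_intervals (a_intInt ha0 hap ham le_rfl hu)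
    (a_intInt ha0 hap ham hu huv)]

lemma A_pos (ha0 : a 0 = 0) (hap : ∀ s, 0 < s → 0 < a s)
    (ham : MonotoneOn a (Set.Ioi 0)) (hAint : ∀ t, 0 ≤ t → A t = ∫ τ in (0:ℝ)..t, a τ)
    {u : ℝ} (hu : 0 < u) : 0 < A u := by
  rw [hAint u hu.le]
  apply intervalIntegral_pos_of_pos_on (a_intInt ha0 hap ham le_rfl hu.le)
    (fun x hx => hap x hx.1) hu

lemma A_nonneg (ha0 : a 0 = 0) (hap : ∀ s, 0 < s → 0 < a s)
    (ham : MonotoneOn a (Set.Ioi 0)) (hAint : ∀ t, 0 ≤ t → A t = ∫ τ in (0:ℝ)..t, a τ)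
    {u : ℝ} (hu : 0 ≤ u) : 0 ≤ A u := by
  rcases eq_or_lt_of_le hu with h | h
  · rw [← h, hAint 0 le_rfl, intervalIntegral.integral_same]
  · exact (A_pos ha0 hap ham hAint h).le

lemma primitive_contOn {f : ℝ → ℝ} (hf : ∀ x : ℝ, 0 ≤ x → IntervalIntegrable f volume 0 x) :
    ContinuousOn (fun t => ∫ τ in (0:ℝ)..t, f τ) (Set.Ici 0) := by
  intro x hx
  have h1 : ContinuousWithinAt (fun t => ∫ τ in (0:ℝ)..t, f τ) (Set.Icc 0 (x+1)) x := by
    apply continuousWithinAt_primitive (measure_singleton x)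
    rw [min_self, max_eq_right (by linarith [hx.out] : (0:ℝ) ≤ x + 1)]
    exact hf _ (by linarith [hx.out])
  apply h1.mono_of_mem_nhdsWithin
  have : Set.Icc 0 (x+1) = Set.Ici 0 ∩ Set.Iic (x+1) := (Set.Ici_inter_Iic).symm
  rw [this]
  exact Filter.inter_mem self_mem_nhdsWithin
    (mem_nhdsWithin_of_mem_nhds (Iic_mem_nhds (by linarith [hx.out])))

lemma A_contOn (ha0 : a 0 = 0) (hap : ∀ s, 0 < s → 0 < a s)
    (ham : MonotoneOn a (Set.Ioi 0)) (hAint : ∀ t, 0 ≤ t → A t = ∫ τ in (0:ℝ)..t, a τ) :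
    ContinuousOn A (Set.Ici 0) := by
  apply ContinuousOn.congr (primitive_contOn (fun x hx => a_intInt ha0 hap ham le_rfl hx))
  intro t ht
  exact hAint t ht


lemma g_contOn (ha0 : a 0 = 0) (hap : ∀ s, 0 < s → 0 < a s)
    (ham : MonotoneOn a (Set.Ioi 0)) (hAint : ∀ t, 0 ≤ t → A t = ∫ τ in (0:ℝ)..t, a τ) :
    ContinuousOn (fun τ => A τ / τ) (Set.Ioi 0) :=
  ContinuousOn.div ((A_contOn ha0 hap ham hAint).mono (Set.Ioi_subset_Ici le_rfl))
    continuousOn_id (fun x hx => ne_of_gt hx)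

lemma W_deriv (ha0 : a 0 = 0) (hap : ∀ s, 0 < s → 0 < a s)
    (ham : MonotoneOn a (Set.Ioi 0)) (hAint : ∀ t, 0 ≤ t → A t = ∫ τ in (0:ℝ)..t, a τ)
    {p u x : ℝ} (hu : 0 < u) (hx : u ≤ x) :
    HasDerivAt (fun y => A u + p * ∫ τ in u..y, A τ / τ) (p * (A x / x)) x := by
  have hx0 : (0:ℝ) < x := lt_of_lt_of_le hu hx
  have hg := g_contOn ha0 hap ham hAint (A := A) (a := a)
  have hint : IntervalIntegrable (fun τ => A τ / τ) volume u x := by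
    apply ContinuousOn.intervalIntegrable
    apply hg.mono
    rw [Set.uIcc_of_le hx]
    exact fun y hy => lt_of_lt_of_le hu hy.1
  have hd : HasDerivAt (fun y => ∫ τ in u..y, A τ / τ) (A x / x) x := by
    apply intervalIntegral.integral_hasDerivAt_right hint
      (hg.stronglyMeasurableAtFilter isOpen_Ioi x hx0)
      (hg.continuousAt (Ioi_mem_nhds hx0))
  simpa using (hd.const_mul p).const_add (A u)

lemma W_le_A (ha0 : a 0 = 0) (hap : ∀ s, 0 < s → 0 < a s)
    (ham : MonotoneOn a (Set.Ioi 0)) (hAint : ∀ t, 0 ≤ t → A t = ∫ τ in (0:ℝ)..t, a τ)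
    {p : ℝ} (hp : 0 < p) (hδ : ∀ τ, 0 < τ → p * (A τ / τ) ≤ a τ)
    {u x : ℝ} (hu : 0 < u) (hx : u ≤ x) :
    A u + p * ∫ τ in u..x, A τ / τ ≤ A x := by
  rw [A_sub ha0 hap ham hAint hu.le hx]
  have hgint : IntervalIntegrable (fun τ => A τ / τ) volume u x := by
    apply ContinuousOn.intervalIntegrable
    apply (g_contOn ha0 hap ham hAint).mono
    rw [Set.uIcc_of_le hx]
    exact fun y hy => lt_of_lt_of_le hu hy.1
  have h1 : p * ∫ τ in u..x, A τ / τ = ∫ τ in u..x, p * (A τ / τ) := by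
    rw [intervalIntegral.integral_const_mul]
  rw [h1]
  gcongr
  apply intervalIntegral.integral_mono_on hx (hgint.const_mul p) (a_intInt ha0 hap ham hu.le hx)
  exact fun τ hτ => hδ τ (lt_of_lt_of_le hu hτ.1)

lemma A_le_W (ha0 : a 0 = 0) (hap : ∀ s, 0 < s → 0 < a s)
    (ham : MonotoneOn a (Set.Ioi 0)) (hAint : ∀ t, 0 ≤ t → A t = ∫ τ in (0:ℝ)..t, a τ)
    {p : ℝ} (hp : 0 < p) (hδ : ∀ τ, 0 < τ → a τ ≤ p * (A τ / τ))
    {u x : ℝ} (hu : 0 < u) (hx : u ≤ x) :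
    A x ≤ A u + p * ∫ τ in u..x, A τ / τ := by
  rw [A_sub ha0 hap ham hAint hu.le hx]
  have hgint : IntervalIntegrable (fun τ => A τ / τ) volume u x := by
    apply ContinuousOn.intervalIntegrable
    apply (g_contOn ha0 hap ham hAint).mono
    rw [Set.uIcc_of_le hx]
    exact fun y hy => lt_of_lt_of_le hu hy.1
  have h1 : p * ∫ τ in u..x, A τ / τ = ∫ τ in u..x, p * (A τ / τ) := by
    rw [intervalIntegral.integral_const_mul]
  rw [h1]
  gcongr
  apply intervalIntegral.integral_mono_on hx (a_intInt ha0 hap ham hu.le hx) (hgint.const_mul p)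
  exact fun τ hτ => hδ τ (lt_of_lt_of_le hu hτ.1)

lemma phi_hasDeriv (ha0 : a 0 = 0) (hap : ∀ s, 0 < s → 0 < a s)
    (ham : MonotoneOn a (Set.Ioi 0)) (hAint : ∀ t, 0 ≤ t → A t = ∫ τ in (0:ℝ)..t, a τ)
    {p u x : ℝ} (hu : 0 < u) (hx : u ≤ x) :
    HasDerivAt (fun y => (A u + p * ∫ τ in u..y, A τ / τ) * y ^ (-p))
      (p * x ^ (-p-1) * (A x - (A u + p * ∫ τ in u..x, A τ / τ))) x := by
  have hx0 : (0:ℝ) < x := lt_of_lt_of_le hu hx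
  have hW := W_deriv ha0 hap ham hAint (p := p) hu hx
  have hR : HasDerivAt (fun y : ℝ => y ^ (-p)) (-p * x ^ (-p-1)) x := by
    simpa using Real.hasDerivAt_rpow_const (p := -p) (Or.inl (ne_of_gt hx0))
  have := hW.mul hR
  refine this.congr_deriv ?_
  have key : x ^ (-p) = x ^ (-p-1) * x := by
    rw [← Real.rpow_add_one (ne_of_gt hx0)]
    ring_nf
  rw [key]
  field_simp
  ring

lemma A_rpow_lower (ha0 : a 0 = 0) (hap : ∀ s, 0 < s → 0 < a s)
    (ham : MonotoneOn a (Set.Ioi 0)) (hAint : ∀ t, 0 ≤ t → A t = ∫ τ in (0:ℝ)..t, a τ)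
    {p : ℝ} (hp : 0 < p) (hδ : ∀ τ, 0 < τ → p * (A τ / τ) ≤ a τ)
    {u v : ℝ} (hu : 0 < u) (huv : u ≤ v) :
    A u * v ^ p ≤ A v * u ^ p := by
  have hv0 : (0:ℝ) < v := lt_of_lt_of_le hu huv
  set φ : ℝ → ℝ := fun y => (A u + p * ∫ τ in u..y, A τ / τ) * y ^ (-p) with hφ
  have hmono : MonotoneOn φ (Set.Icc u v) := by
    apply monotoneOn_of_deriv_nonneg (convex_Icc u v)
    · intro x hx
      exact ((phi_hasDeriv ha0 hap ham hAint hu hx.1).continuousAt).continuousWithinAt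
    · intro x hx
      rw [interior_Icc] at hx
      exact ((phi_hasDeriv ha0 hap ham hAint hu hx.1.le).differentiableAt).differentiableWithinAt
    · intro x hx
      rw [interior_Icc] at hx
      rw [(phi_hasDeriv ha0 hap ham hAint hu hx.1.le).deriv]
      have hx0 : (0:ℝ) < x := lt_of_lt_of_le hu hx.1.le
      have hAW := W_le_A ha0 hap ham hAint hp hδ hu hx.1.le
      have hQ : (0:ℝ) < x ^ (-p-1) := Real.rpow_pos_of_pos hx0 _
      nlinarith [mul_nonneg (mul_nonneg hp.le hQ.le) (sub_nonneg.2 hAW)]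
  have h2 : φ u ≤ φ v := hmono (Set.left_mem_Icc.2 huv) (Set.right_mem_Icc.2 huv) huv
  have hφu : φ u = A u * u ^ (-p) := by simp [hφ]
  have hφv : φ v ≤ A v * v ^ (-p) := by
    have hAW := W_le_A ha0 hap ham hAint hp hδ hu huv
    exact mul_le_mul_of_nonneg_right hAW (Real.rpow_pos_of_pos hv0 _).le
  have h3 : A u * u ^ (-p) ≤ A v * v ^ (-p) := by
    rw [← hφu]; exact h2.trans hφv
  rw [Real.rpow_neg hu.le, Real.rpow_neg hv0.le, ← div_eq_mul_inv, ← div_eq_mul_inv] at h3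
  rw [div_le_div_iff₀ (Real.rpow_pos_of_pos hu _) (Real.rpow_pos_of_pos hv0 _)] at h3
  linarith

lemma A_rpow_upper (ha0 : a 0 = 0) (hap : ∀ s, 0 < s → 0 < a s)
    (ham : MonotoneOn a (Set.Ioi 0)) (hAint : ∀ t, 0 ≤ t → A t = ∫ τ in (0:ℝ)..t, a τ)
    {p : ℝ} (hp : 0 < p) (hδ : ∀ τ, 0 < τ → a τ ≤ p * (A τ / τ))
    {u v : ℝ} (hu : 0 < u) (huv : u ≤ v) :
    A v * u ^ p ≤ A u * v ^ p := by
  have hv0 : (0:ℝ) < v := lt_of_lt_of_le hu huv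
  set φ : ℝ → ℝ := fun y => (A u + p * ∫ τ in u..y, A τ / τ) * y ^ (-p) with hφ
  have hmono : AntitoneOn φ (Set.Icc u v) := by
    apply antitoneOn_of_deriv_nonpos (convex_Icc u v)
    · intro x hx
      exact ((phi_hasDeriv ha0 hap ham hAint hu hx.1).continuousAt).continuousWithinAt
    · intro x hx
      rw [interior_Icc] at hx
      exact ((phi_hasDeriv ha0 hap ham hAint hu hx.1.le).differentiableAt).differentiableWithinAt
    · intro x hx
      rw [interior_Icc] at hx
      rw [(phi_hasDeriv ha0 hap ham hAint hu hx.1.le).deriv]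
      have hx0 : (0:ℝ) < x := lt_of_lt_of_le hu hx.1.le
      have hAW := A_le_W ha0 hap ham hAint hp hδ hu hx.1.le
      have hQ : (0:ℝ) < x ^ (-p-1) := Real.rpow_pos_of_pos hx0 _
      nlinarith [mul_nonneg (mul_nonneg hp.le hQ.le) (sub_nonneg.2 hAW)]
  have h2 : φ v ≤ φ u := hmono (Set.left_mem_Icc.2 huv) (Set.right_mem_Icc.2 huv) huv
  have hφu : φ u = A u * u ^ (-p) := by simp [hφ]
  have hφv : A v * v ^ (-p) ≤ φ v := by
    have hAW := A_le_W ha0 hap ham hAint hp hδ hu huv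
    exact mul_le_mul_of_nonneg_right hAW (Real.rpow_pos_of_pos hv0 _).le
  have h3 : A v * v ^ (-p) ≤ A u * u ^ (-p) := by
    rw [← hφu]; exact hφv.trans h2
  rw [Real.rpow_neg hu.le, Real.rpow_neg hv0.le, ← div_eq_mul_inv, ← div_eq_mul_inv] at h3
  rw [div_le_div_iff₀ (Real.rpow_pos_of_pos hv0 _) (Real.rpow_pos_of_pos hu _)] at h3
  linarith

/-! ### Section 2 : the function h and its primitive I -/

section hI
variable {A : ℝ → ℝ} {n : ℕ} {pm : ℝ}

lemma h_contOn (hAc : ContinuousOn A (Set.Ici 0)) (hApos : ∀ u : ℝ, 0 < u → 0 < A u) :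
    ContinuousOn (fun τ : ℝ => (τ / A τ) ^ ((1:ℝ)/((n:ℝ)-1))) (Set.Ioi 0) := by
  apply ContinuousOn.rpow_const
  · exact ContinuousOn.div continuousOn_id (hAc.mono (Set.Ioi_subset_Ici le_rfl))
      (fun x hx => ne_of_gt (hApos x hx))
  · intro x hx
    exact Or.inl (ne_of_gt (div_pos hx (hApos x hx)))

lemma h_pos (hApos : ∀ u : ℝ, 0 < u → 0 < A u) (hn : 2 ≤ n) {τ : ℝ} (hτ : 0 < τ) :
    0 < (τ / A τ) ^ ((1:ℝ)/((n:ℝ)-1)) :=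
  Real.rpow_pos_of_pos (div_pos hτ (hApos τ hτ)) _

lemma h_intInt (hAc : ContinuousOn A (Set.Ici 0)) (hApos : ∀ u : ℝ, 0 < u → 0 < A u)
    (hA3 : ∃ d : ℝ, 0 < d ∧
      IntegrableOn (fun t : ℝ => (t / A t) ^ ((1:ℝ) / ((n:ℝ) - 1))) (Set.Ioc 0 d) volume)
    {x : ℝ} (hx : 0 ≤ x) :
    IntervalIntegrable (fun τ : ℝ => (τ / A τ) ^ ((1:ℝ)/((n:ℝ)-1))) volume 0 x := by
  obtain ⟨d, hd, hint⟩ := hA3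
  rw [intervalIntegrable_iff_integrableOn_Ioc_of_le hx]
  rcases le_or_gt x d with hxd | hxd
  · exact hint.mono_set (Set.Ioc_subset_Ioc le_rfl hxd)
  · have : Set.Ioc (0:ℝ) x = Set.Ioc 0 d ∪ Set.Ioc d x := (Set.Ioc_union_Ioc_eq_Ioc hd.le hxd.le).symm
    rw [this]
    apply hint.union
    have hcont : ContinuousOn (fun τ : ℝ => (τ / A τ) ^ ((1:ℝ)/((n:ℝ)-1))) (Set.Icc d x) :=
      (h_contOn hAc hApos).mono (fun y hy => lt_of_lt_of_le hd hy.1)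
    exact (hcont.integrableOn_compact isCompact_Icc).mono_set Set.Ioc_subset_Icc_self

lemma h_intInt' (hAc : ContinuousOn A (Set.Ici 0)) (hApos : ∀ u : ℝ, 0 < u → 0 < A u)
    (hA3 : ∃ d : ℝ, 0 < d ∧
      IntegrableOn (fun t : ℝ => (t / A t) ^ ((1:ℝ) / ((n:ℝ) - 1))) (Set.Ioc 0 d) volume)
    {u v : ℝ} (hu : 0 ≤ u) (huv : u ≤ v) :
    IntervalIntegrable (fun τ : ℝ => (τ / A τ) ^ ((1:ℝ)/((n:ℝ)-1))) volume u v := by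
  apply (h_intInt hAc hApos hA3 (hu.trans huv)).mono_set
  rw [Set.uIcc_of_le huv, Set.uIcc_of_le (hu.trans huv)]
  exact Set.Icc_subset_Icc hu le_rfl

lemma I_pos (hAc : ContinuousOn A (Set.Ici 0)) (hApos : ∀ u : ℝ, 0 < u → 0 < A u) (hn : 2 ≤ n)
    (hA3 : ∃ d : ℝ, 0 < d ∧
      IntegrableOn (fun t : ℝ => (t / A t) ^ ((1:ℝ) / ((n:ℝ) - 1))) (Set.Ioc 0 d) volume)
    {x : ℝ} (hx : 0 < x) :
    0 < ∫ τ in (0:ℝ)..x, (τ / A τ) ^ ((1:ℝ)/((n:ℝ)-1)) := by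
  apply intervalIntegral.intervalIntegral_pos_of_pos_on (h_intInt hAc hApos hA3 hx.le)
    (fun y hy => h_pos hApos hn hy.1) hx

lemma base_le (hApos : ∀ u : ℝ, 0 < u → 0 < A u) {u τ : ℝ} (hu : 0 < u) (hτ : 0 < τ)
    (hcomp : A u * τ ^ pm ≤ A τ * u ^ pm) :
    τ / A τ ≤ (u ^ pm / A u) * τ ^ (1 - pm) := by
  have hAu := hApos u hu
  have hAτ := hApos τ hτ
  have h1 : τ ^ pm * τ ^ (1-pm) = τ := by
    rw [← Real.rpow_add hτ]; norm_num
  have h2 := mul_le_mul_of_nonneg_right hcomp (Real.rpow_pos_of_pos hτ (1-pm)).le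
  rw [div_mul_eq_mul_div, div_le_div_iff₀ hAτ hAu]
  calc τ * A u = A u * τ ^ pm * τ ^ (1-pm) := by rw [mul_assoc, h1]; ring
    _ ≤ A τ * u ^ pm * τ ^ (1-pm) := h2
    _ = u ^ pm * τ ^ (1-pm) * A τ := by ring

lemma base_ge (hApos : ∀ u : ℝ, 0 < u → 0 < A u) {u τ : ℝ} (hu : 0 < u) (hτ : 0 < τ)
    (hcomp : A τ * u ^ pm ≤ A u * τ ^ pm) :
    (u ^ pm / A u) * τ ^ (1 - pm) ≤ τ / A τ := by
  have hAu := hApos u hu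
  have hAτ := hApos τ hτ
  have h1 : τ ^ pm * τ ^ (1-pm) = τ := by
    rw [← Real.rpow_add hτ]; norm_num
  have h2 := mul_le_mul_of_nonneg_right hcomp (Real.rpow_pos_of_pos hτ (1-pm)).le
  rw [div_mul_eq_mul_div, div_le_div_iff₀ hAu hAτ]
  calc u ^ pm * τ ^ (1-pm) * A τ = A τ * u ^ pm * τ ^ (1-pm) := by ring
    _ ≤ A u * τ ^ pm * τ ^ (1-pm) := h2
    _ = τ * A u := by rw [mul_assoc, h1]; ring

lemma h_pt_le (hApos : ∀ u : ℝ, 0 < u → 0 < A u) {u τ : ℝ} (hu : 0 < u) (hτ : 0 < τ)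
    (hcomp : A u * τ ^ pm ≤ A τ * u ^ pm) {e : ℝ} (he : 0 ≤ e) :
    (τ / A τ) ^ e ≤ (u ^ pm / A u) ^ e * τ ^ ((1 - pm) * e) := by
  have h0 : (0:ℝ) ≤ τ / A τ := (div_pos hτ (hApos τ hτ)).le
  have h1 := Real.rpow_le_rpow h0 (base_le hApos hu hτ hcomp) he
  rwa [Real.mul_rpow (div_pos (Real.rpow_pos_of_pos hu pm) (hApos u hu)).le
    (Real.rpow_pos_of_pos hτ (1-pm)).le, ← Real.rpow_mul hτ.le] at h1

lemma h_pt_ge (hApos : ∀ u : ℝ, 0 < u → 0 < A u) {u τ : ℝ} (hu : 0 < u) (hτ : 0 < τ)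
    (hcomp : A τ * u ^ pm ≤ A u * τ ^ pm) {e : ℝ} (he : 0 ≤ e) :
    (u ^ pm / A u) ^ e * τ ^ ((1 - pm) * e) ≤ (τ / A τ) ^ e := by
  have h0 : (0:ℝ) ≤ (u ^ pm / A u) * τ ^ (1 - pm) :=
    mul_nonneg (div_pos (Real.rpow_pos_of_pos hu pm) (hApos u hu)).le
      (Real.rpow_pos_of_pos hτ (1-pm)).le
  have h1 := Real.rpow_le_rpow h0 (base_ge hApos hu hτ hcomp) he
  rwa [Real.mul_rpow (div_pos (Real.rpow_pos_of_pos hu pm) (hApos u hu)).le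
    (Real.rpow_pos_of_pos hτ (1-pm)).le, ← Real.rpow_mul hτ.le] at h1

lemma I_lower_est (hAc : ContinuousOn A (Set.Ici 0)) (hApos : ∀ u : ℝ, 0 < u → 0 < A u)
    (hn : 2 ≤ n) (hpm1 : 1 < pm) (hpmn : pm < (n:ℝ))
    (hA3 : ∃ d : ℝ, 0 < d ∧
      IntegrableOn (fun t : ℝ => (t / A t) ^ ((1:ℝ) / ((n:ℝ) - 1))) (Set.Ioc 0 d) volume)
    (hlow : ∀ u v : ℝ, 0 < u → u ≤ v → A u * v ^ pm ≤ A v * u ^ pm)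
    {e γ : ℝ} (he : e = 1/((n:ℝ)-1)) (hγ : γ = ((n:ℝ)-pm)/((n:ℝ)-1))
    {u : ℝ} (hu : 0 < u) :
    (u ^ pm / A u) ^ e * (u ^ γ / γ) ≤ ∫ τ in (0:ℝ)..u, (τ / A τ) ^ ((1:ℝ)/((n:ℝ)-1)) := by
  have hm : (0:ℝ) < (n:ℝ) - 1 := by
    have : (2:ℝ) ≤ (n:ℝ) := by exact_mod_cast hn
    linarith
  have hepos : 0 < e := he ▸ by positivity
  have hγpos : 0 < γ := hγ ▸ div_pos (by linarith) hm
  have hγ'lt : -1 < (1-pm) * e := by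
    rw [he]
    rw [mul_one_div, lt_div_iff₀ hm]
    linarith
  have hγ'ne : (1-pm) * e ≠ 0 := by
    apply ne_of_lt
    rw [he, mul_one_div]
    apply div_neg_of_neg_of_pos (by linarith) hm
  have hγ'1 : (1-pm) * e + 1 = γ := by
    rw [he, hγ]
    field_simp
    ring
  set C := (u ^ pm / A u) ^ e with hC
  have hCpos : 0 < C := Real.rpow_pos_of_pos (div_pos (Real.rpow_pos_of_pos hu pm) (hApos u hu)) e
  have hint1 : IntervalIntegrable (fun τ : ℝ => C * τ ^ ((1-pm)*e)) volume 0 u :=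
    (intervalIntegral.intervalIntegrable_rpow' hγ'lt).const_mul C
  have hmono : (∫ τ in (0:ℝ)..u, C * τ ^ ((1-pm)*e))
      ≤ ∫ τ in (0:ℝ)..u, (τ / A τ) ^ ((1:ℝ)/((n:ℝ)-1)) := by
    apply intervalIntegral.integral_mono_on hu.le hint1 (h_intInt hAc hApos hA3 hu.le)
    intro τ hτ
    rcases eq_or_lt_of_le hτ.1 with h0 | h0
    · rw [← h0]
      rw [Real.zero_rpow hγ'ne, mul_zero, zero_div, Real.zero_rpow (by positivity)]
    · have := h_pt_ge (pm := pm) hApos hu h0 (hlow τ u h0 hτ.2) hepos.le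
      rw [hC, he]
      rw [he] at this
      exact this
  refine le_trans (le_of_eq ?_) hmono
  rw [intervalIntegral.integral_const_mul, integral_rpow (Or.inl hγ'lt)]
  rw [Real.zero_rpow (by rw [hγ'1]; exact ne_of_gt hγpos), hγ'1]
  ring

lemma int_upper_est (hAc : ContinuousOn A (Set.Ici 0)) (hApos : ∀ u : ℝ, 0 < u → 0 < A u)
    (hn : 2 ≤ n) (hpm1 : 1 < pm) (hpmn : pm < (n:ℝ))
    (hA3 : ∃ d : ℝ, 0 < d ∧
      IntegrableOn (fun t : ℝ => (t / A t) ^ ((1:ℝ) / ((n:ℝ) - 1))) (Set.Ioc 0 d) volume)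
    (hlow : ∀ u v : ℝ, 0 < u → u ≤ v → A u * v ^ pm ≤ A v * u ^ pm)
    {e γ : ℝ} (he : e = 1/((n:ℝ)-1)) (hγ : γ = ((n:ℝ)-pm)/((n:ℝ)-1))
    {u v : ℝ} (hu : 0 < u) (huv : u ≤ v) :
    (∫ τ in u..v, (τ / A τ) ^ ((1:ℝ)/((n:ℝ)-1)))
      ≤ (u ^ pm / A u) ^ e * (v ^ γ / γ) := by
  have hm : (0:ℝ) < (n:ℝ) - 1 := by
    have : (2:ℝ) ≤ (n:ℝ) := by exact_mod_cast hn
    linarith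
  have hv : 0 < v := lt_of_lt_of_le hu huv
  have hepos : 0 < e := he ▸ by positivity
  have hγpos : 0 < γ := hγ ▸ div_pos (by linarith) hm
  have hγ'lt : -1 < (1-pm) * e := by
    rw [he, mul_one_div, lt_div_iff₀ hm]
    linarith
  have hγ'1 : (1-pm) * e + 1 = γ := by
    rw [he, hγ]
    field_simp
    ring
  set C := (u ^ pm / A u) ^ e with hC
  have hCpos : 0 < C := Real.rpow_pos_of_pos (div_pos (Real.rpow_pos_of_pos hu pm) (hApos u hu)) e
  have hint1 : IntervalIntegrable (fun τ : ℝ => C * τ ^ ((1-pm)*e)) volume u v :=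
    (intervalIntegral.intervalIntegrable_rpow' hγ'lt).const_mul C
  have hmono : (∫ τ in u..v, (τ / A τ) ^ ((1:ℝ)/((n:ℝ)-1)))
      ≤ ∫ τ in u..v, C * τ ^ ((1-pm)*e) := by
    apply intervalIntegral.integral_mono_on huv
      (h_intInt' hAc hApos hA3 hu.le huv) hint1
    intro τ hτ
    have hτ0 : 0 < τ := lt_of_lt_of_le hu hτ.1
    have := h_pt_le (pm := pm) hApos hu hτ0 (hlow u τ hu hτ.1) hepos.le
    rw [hC, he]
    rw [he] at this
    exact this
  refine hmono.trans ?_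
  rw [intervalIntegral.integral_const_mul, integral_rpow (Or.inl hγ'lt), hγ'1]
  have hul : (0:ℝ) ≤ u ^ γ := (Real.rpow_pos_of_pos hu γ).le
  have : (v ^ γ - u ^ γ) / γ ≤ v ^ γ / γ :=
    (div_le_div_iff_of_pos_right hγpos).2 (by linarith)
  exact mul_le_mul_of_nonneg_left this hCpos.le

lemma I_ratio (hAc : ContinuousOn A (Set.Ici 0)) (hApos : ∀ u : ℝ, 0 < u → 0 < A u)
    (hn : 2 ≤ n) (hpm1 : 1 < pm) (hpmn : pm < (n:ℝ))
    (hA3 : ∃ d : ℝ, 0 < d ∧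
      IntegrableOn (fun t : ℝ => (t / A t) ^ ((1:ℝ) / ((n:ℝ) - 1))) (Set.Ioc 0 d) volume)
    (hlow : ∀ u v : ℝ, 0 < u → u ≤ v → A u * v ^ pm ≤ A v * u ^ pm)
    {γ : ℝ} (hγ : γ = ((n:ℝ)-pm)/((n:ℝ)-1))
    {u v : ℝ} (hu : 0 < u) (huv : u ≤ v) :
    (∫ τ in (0:ℝ)..v, (τ / A τ) ^ ((1:ℝ)/((n:ℝ)-1)))
      ≤ 2 * (v/u) ^ γ * ∫ τ in (0:ℝ)..u, (τ / A τ) ^ ((1:ℝ)/((n:ℝ)-1)) := by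
  have hm : (0:ℝ) < (n:ℝ) - 1 := by
    have : (2:ℝ) ≤ (n:ℝ) := by exact_mod_cast hn
    linarith
  have hv : 0 < v := lt_of_lt_of_le hu huv
  have hγpos : 0 < γ := hγ ▸ div_pos (by linarith) hm
  set e : ℝ := 1/((n:ℝ)-1) with he
  set Iu := ∫ τ in (0:ℝ)..u, (τ / A τ) ^ ((1:ℝ)/((n:ℝ)-1)) with hIu
  have hIupos : 0 < Iu := I_pos hAc hApos hn hA3 hu
  have hsplit : (∫ τ in (0:ℝ)..v, (τ / A τ) ^ ((1:ℝ)/((n:ℝ)-1)))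
      = Iu + ∫ τ in u..v, (τ / A τ) ^ ((1:ℝ)/((n:ℝ)-1)) := by
    rw [hIu]
    rw [intervalIntegral.integral_add_adjacent_intervals (h_intInt hAc hApos hA3 hu.le)
      (h_intInt' hAc hApos hA3 hu.le huv)]
  have hup := int_upper_est hAc hApos hn hpm1 hpmn hA3 hlow he hγ hu huv
  have hlowI := I_lower_est hAc hApos hn hpm1 hpmn hA3 hlow he hγ hu
  have hid : (u ^ pm / A u) ^ e * (v ^ γ / γ)
      = (v/u) ^ γ * ((u ^ pm / A u) ^ e * (u ^ γ / γ)) := by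
    rw [Real.div_rpow hv.le hu.le]
    have h1 : u ^ γ ≠ 0 := ne_of_gt (Real.rpow_pos_of_pos hu γ)
    field_simp
  have hrat1 : (1:ℝ) ≤ (v/u) ^ γ :=
    Real.one_le_rpow ((one_le_div hu).2 huv) hγpos.le
  have hkey : (∫ τ in u..v, (τ / A τ) ^ ((1:ℝ)/((n:ℝ)-1))) ≤ (v/u) ^ γ * Iu := by
    refine hup.trans ?_
    rw [hid]
    exact mul_le_mul_of_nonneg_left hlowI (by positivity)
  rw [hsplit]
  have h2 : Iu ≤ (v/u) ^ γ * Iu := le_mul_of_one_le_left hIupos.le hrat1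
  nlinarith [hkey, h2]

lemma I_mono (hAc : ContinuousOn A (Set.Ici 0)) (hApos : ∀ u : ℝ, 0 < u → 0 < A u)
    (hA3 : ∃ d : ℝ, 0 < d ∧
      IntegrableOn (fun t : ℝ => (t / A t) ^ ((1:ℝ) / ((n:ℝ) - 1))) (Set.Ioc 0 d) volume)
    {x y : ℝ} (hx : 0 ≤ x) (hxy : x ≤ y) :
    (∫ τ in (0:ℝ)..x, (τ / A τ) ^ ((1:ℝ)/((n:ℝ)-1)))
      ≤ ∫ τ in (0:ℝ)..y, (τ / A τ) ^ ((1:ℝ)/((n:ℝ)-1)) := by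
  rw [← intervalIntegral.integral_add_adjacent_intervals (h_intInt hAc hApos hA3 hx)
      (h_intInt' hAc hApos hA3 hx hxy)]
  have : 0 ≤ ∫ τ in x..y, (τ / A τ) ^ ((1:ℝ)/((n:ℝ)-1)) := by
    apply intervalIntegral.integral_nonneg hxy
    intro τ hτ
    rcases eq_or_lt_of_le (hx.trans hτ.1) with h0 | h0
    · rw [← h0, zero_div]
      exact Real.rpow_nonneg le_rfl _
    · exact (Real.rpow_pos_of_pos (div_pos h0 (hApos τ h0)) _).le
  linarith

lemma h_nonneg (hApos : ∀ u : ℝ, 0 < u → 0 < A u) {τ : ℝ} (hτ : 0 ≤ τ) :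
    0 ≤ (τ / A τ) ^ ((1:ℝ)/((n:ℝ)-1)) := by
  rcases eq_or_lt_of_le hτ with h0 | h0
  · rw [← h0, zero_div]
    exact Real.rpow_nonneg le_rfl _
  · exact (Real.rpow_pos_of_pos (div_pos h0 (hApos τ h0)) _).le

lemma I_unbounded (hAc : ContinuousOn A (Set.Ici 0)) (hApos : ∀ u : ℝ, 0 < u → 0 < A u)
    (hA2 : ∃ K : ℝ, 0 < K ∧
      ¬ IntegrableOn (fun t : ℝ => (t / A t) ^ ((1:ℝ) / ((n:ℝ) - 1))) (Set.Ioi K) volume)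
    (hA3 : ∃ d : ℝ, 0 < d ∧
      IntegrableOn (fun t : ℝ => (t / A t) ^ ((1:ℝ) / ((n:ℝ) - 1))) (Set.Ioc 0 d) volume)
    (M : ℝ) :
    ∃ x : ℝ, 0 ≤ x ∧ M ≤ ∫ τ in (0:ℝ)..x, (τ / A τ) ^ ((1:ℝ)/((n:ℝ)-1)) := by
  by_contra hcon
  push_neg at hcon
  obtain ⟨K, hK, hnint⟩ := hA2
  apply hnint
  set h : ℝ → ℝ := fun τ => (τ / A τ) ^ ((1:ℝ)/((n:ℝ)-1)) with hh
  have hfi : ∀ i : ℝ, IntegrableOn h (Set.Ioc K i) volume := by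
    intro i
    rcases le_or_gt i K with hiK | hiK
    · rw [Set.Ioc_eq_empty (by exact not_lt.2 hiK)]
      exact integrableOn_empty
    · have := (h_intInt' hAc hApos hA3 hK.le hiK.le)
      rw [intervalIntegrable_iff_integrableOn_Ioc_of_le hiK.le] at this
      exact this
  apply MeasureTheory.integrableOn_Ioi_of_intervalIntegral_norm_bounded M K hfi
    (tendsto_id (α := ℝ))
  filter_upwards [Filter.eventually_ge_atTop K] with i hi
  have heq : (∫ x in K..i, ‖h x‖) = ∫ x in K..i, h x := by
    apply intervalIntegral.integral_congr
    intro x hx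
    rw [Set.uIcc_of_le hi] at hx
    exact Real.norm_of_nonneg (h_nonneg hApos (hK.le.trans hx.1))
  rw [heq]
  have hsplit : (∫ τ in (0:ℝ)..i, h τ) = (∫ τ in (0:ℝ)..K, h τ) + ∫ τ in K..i, h τ := by
    rw [intervalIntegral.integral_add_adjacent_intervals (h_intInt hAc hApos hA3 hK.le)
      (h_intInt' hAc hApos hA3 hK.le hi)]
  have h1 : (∫ τ in (0:ℝ)..i, h τ) < M := hcon i (hK.le.trans hi)
  have h2 : 0 ≤ ∫ τ in (0:ℝ)..K, h τ := by
    apply intervalIntegral.integral_nonneg hK.le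
    exact fun τ hτ => h_nonneg hApos hτ.1

  linarith

lemma Hfun_zero (hn : 2 ≤ n) : Hfun A n 0 = 0 := by
  have hm : (0:ℝ) < (n:ℝ) - 1 := by
    have : (2:ℝ) ≤ (n:ℝ) := by exact_mod_cast hn
    linarith
  rw [Hfun, intervalIntegral.integral_same, Real.zero_rpow]
  positivity

lemma Hfun_contOn (hAc : ContinuousOn A (Set.Ici 0)) (hApos : ∀ u : ℝ, 0 < u → 0 < A u)
    (hn : 2 ≤ n)
    (hA3 : ∃ d : ℝ, 0 < d ∧
      IntegrableOn (fun t : ℝ => (t / A t) ^ ((1:ℝ) / ((n:ℝ) - 1))) (Set.Ioc 0 d) volume) :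
    ContinuousOn (Hfun A n) (Set.Ici 0) := by
  have hm : (0:ℝ) < (n:ℝ) - 1 := by
    have : (2:ℝ) ≤ (n:ℝ) := by exact_mod_cast hn
    linarith
  apply ContinuousOn.rpow_const
  · exact primitive_contOn (fun x hx => h_intInt hAc hApos hA3 hx)
  · intro x hx
    right
    positivity

lemma Hfun_surj (hAc : ContinuousOn A (Set.Ici 0)) (hApos : ∀ u : ℝ, 0 < u → 0 < A u)
    (hn : 2 ≤ n)
    (hA2 : ∃ K : ℝ, 0 < K ∧
      ¬ IntegrableOn (fun t : ℝ => (t / A t) ^ ((1:ℝ) / ((n:ℝ) - 1))) (Set.Ioi K) volume)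
    (hA3 : ∃ d : ℝ, 0 < d ∧
      IntegrableOn (fun t : ℝ => (t / A t) ^ ((1:ℝ) / ((n:ℝ) - 1))) (Set.Ioc 0 d) volume)
    {s : ℝ} (hs : 0 ≤ s) :
    ∃ x : ℝ, 0 ≤ x ∧ Hfun A n x = s := by
  have hm : (0:ℝ) < (n:ℝ) - 1 := by
    have : (2:ℝ) ≤ (n:ℝ) := by exact_mod_cast hn
    linarith
  have hnn : (0:ℝ) < (n:ℝ) := by linarith
  have hβ : (0:ℝ) < ((n:ℝ)-1)/(n:ℝ) := by positivity
  obtain ⟨x, hx0, hx⟩ := I_unbounded hAc hApos hA2 hA3 (s ^ ((n:ℝ)/((n:ℝ)-1)))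
  have hIx : s ≤ Hfun A n x := by
    rw [Hfun]
    calc s = (s ^ ((n:ℝ)/((n:ℝ)-1))) ^ (((n:ℝ)-1)/(n:ℝ)) := by
          rw [← Real.rpow_mul hs]
          rw [show ((n:ℝ)/((n:ℝ)-1)) * (((n:ℝ)-1)/(n:ℝ)) = 1 by field_simp]
          exact (Real.rpow_one s).symm
      _ ≤ _ := by
          apply Real.rpow_le_rpow (Real.rpow_nonneg hs _) hx hβ.le
  have hIVT := intermediate_value_Icc hx0
    ((Hfun_contOn hAc hApos hn hA3).mono (fun y hy => hy.1))
  have hmem : s ∈ Set.Icc (Hfun A n 0) (Hfun A n x) := by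
    constructor
    · rw [Hfun_zero hn]; exact hs
    · exact hIx
  obtain ⟨y, hy, hys⟩ := hIVT hmem
  exact ⟨y, hy.1, hys⟩

lemma Hfun_ratio (hAc : ContinuousOn A (Set.Ici 0)) (hApos : ∀ u : ℝ, 0 < u → 0 < A u)
    (hn : 2 ≤ n) (hpm1 : 1 < pm) (hpmn : pm < (n:ℝ))
    (hA3 : ∃ d : ℝ, 0 < d ∧
      IntegrableOn (fun t : ℝ => (t / A t) ^ ((1:ℝ) / ((n:ℝ) - 1))) (Set.Ioc 0 d) volume)
    (hlow : ∀ u v : ℝ, 0 < u → u ≤ v → A u * v ^ pm ≤ A v * u ^ pm)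
    {u v : ℝ} (hu : 0 < u) (huv : u ≤ v) :
    Hfun A n v ≤ 2 * (v/u) ^ (((n:ℝ)-pm)/(n:ℝ)) * Hfun A n u := by
  have hm : (0:ℝ) < (n:ℝ) - 1 := by
    have : (2:ℝ) ≤ (n:ℝ) := by exact_mod_cast hn
    linarith
  have hnn : (0:ℝ) < (n:ℝ) := by linarith
  have hv : 0 < v := lt_of_lt_of_le hu huv
  set γ : ℝ := ((n:ℝ)-pm)/((n:ℝ)-1) with hγ
  set β : ℝ := ((n:ℝ)-1)/(n:ℝ) with hβ
  have hβpos : 0 < β := by rw [hβ]; positivity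
  have hβ1 : β ≤ 1 := by
    rw [hβ, div_le_one hnn]
    linarith
  set Iu := ∫ τ in (0:ℝ)..u, (τ / A τ) ^ ((1:ℝ)/((n:ℝ)-1)) with hIu
  set Iv := ∫ τ in (0:ℝ)..v, (τ / A τ) ^ ((1:ℝ)/((n:ℝ)-1)) with hIv
  have hIupos : 0 < Iu := I_pos hAc hApos hn hA3 hu
  have hIvpos : 0 < Iv := I_pos hAc hApos hn hA3 hv
  have hratio := I_ratio hAc hApos hn hpm1 hpmn hA3 hlow hγ hu huv
  have hH : Hfun A n v = Iv ^ β ∧ Hfun A n u = Iu ^ β := ⟨rfl, rfl⟩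
  rw [hH.1, hH.2]
  have h1 : Iv ^ β ≤ (2 * (v/u) ^ γ * Iu) ^ β :=
    Real.rpow_le_rpow hIvpos.le hratio hβpos.le
  refine h1.trans ?_
  have hvu : (0:ℝ) ≤ (v/u) ^ γ := (Real.rpow_pos_of_pos (div_pos hv hu) γ).le
  rw [Real.mul_rpow (by positivity) hIupos.le, Real.mul_rpow (by norm_num) hvu]
  have h2 : (2:ℝ) ^ β ≤ 2 := by
    calc (2:ℝ) ^ β ≤ (2:ℝ) ^ (1:ℝ) :=
          Real.rpow_le_rpow_of_exponent_le (by norm_num) hβ1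
      _ = 2 := Real.rpow_one 2
  have h3 : ((v/u) ^ γ) ^ β = (v/u) ^ (((n:ℝ)-pm)/(n:ℝ)) := by
    rw [← Real.rpow_mul (div_pos hv hu).le]
    congr 1
    rw [hγ, hβ]
    field_simp
  rw [h3]
  have h4 : (0:ℝ) ≤ (v/u) ^ (((n:ℝ)-pm)/(n:ℝ)) := Real.rpow_nonneg (div_pos hv hu).le _
  have h5 : (0:ℝ) ≤ Iu ^ β := Real.rpow_nonneg hIupos.le _
  calc (2:ℝ) ^ β * (v/u) ^ (((n:ℝ)-pm)/(n:ℝ)) * Iu ^ β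
      = (2:ℝ) ^ β * ((v/u) ^ (((n:ℝ)-pm)/(n:ℝ)) * Iu ^ β) := by ring
    _ ≤ 2 * ((v/u) ^ (((n:ℝ)-pm)/(n:ℝ)) * Iu ^ β) :=
        mul_le_mul_of_nonneg_right h2 (by positivity)
    _ = 2 * (v/u) ^ (((n:ℝ)-pm)/(n:ℝ)) * Iu ^ β := by ring

end hI


/-- Lemma 4.2 (AinftyMn): `A_∞ ≪ M_n`, i.e. for every `c > 0`,
`A_∞(ct)/M_n(t) → 0` as `t → ∞`, where `A_∞(t) = max{t^{p⁺}, t^{p⁻}}` and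
`M_n` is the Matuszewska–Orlicz function of `A_n = A ∘ H⁻¹`. -/
theorem Ainfty_essentially_smaller_Mn (n : ℕ) (hn : 2 ≤ n) (a A : ℝ → ℝ) (pm pp : ℝ)
    (hA : IsYoungPair a A) (hpm : 1 < pm) (hpmpp : pm ≤ pp) (hppn : pp < n)
    (hpstar : pp < (n : ℝ) * pm / ((n : ℝ) - pm))
    (hδ : ∀ t, 0 < t → pm ≤ t * a t / A t ∧ t * a t / A t ≤ pp)
    (hA2 : ∃ K : ℝ, 0 < K ∧
      ¬ IntegrableOn (fun t : ℝ => (t / A t) ^ ((1:ℝ) / ((n:ℝ) - 1))) (Set.Ioi K) volume)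
    (hA3 : ∃ d : ℝ, 0 < d ∧
      IntegrableOn (fun t : ℝ => (t / A t) ^ ((1:ℝ) / ((n:ℝ) - 1))) (Set.Ioc 0 d) volume)
    (hHmono : StrictMonoOn (Hfun A n) (Set.Ici 0))
    (Hinv : ℝ → ℝ)
    (hHinv₁ : ∀ t, 0 ≤ t → Hinv (Hfun A n t) = t)
    (hHinv₂ : ∀ s, 0 ≤ s → Hfun A n (Hinv s) = s) :
    ∀ c : ℝ, 0 < c →
      Filter.Tendsto
        (fun t : ℝ => max ((c * t) ^ pp) ((c * t) ^ pm) / matus (fun s => A (Hinv s)) t)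
        Filter.atTop (nhds 0) := by
  intro c hc
  obtain ⟨ha0, hap, harc, ham, hAint⟩ := hA
  -- basic numeric facts
  have hnR : (2:ℝ) ≤ (n:ℝ) := by exact_mod_cast hn
  have hm : (0:ℝ) < (n:ℝ) - 1 := by linarith
  have hppR : pp < (n:ℝ) := hppn
  have hpmn : pm < (n:ℝ) := lt_of_le_of_lt hpmpp hppn
  have hnpm : (0:ℝ) < (n:ℝ) - pm := by linarith
  have hpm0 : (0:ℝ) < pm := by linarith
  have hpp0 : (0:ℝ) < pp := by linarith
  set q : ℝ := (n:ℝ) * pm / ((n:ℝ) - pm) with hq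
  have hqpos : 0 < q := by rw [hq]; positivity
  have hppq : pp < q := hpstar
  -- basic analytic facts
  have hAc : ContinuousOn A (Set.Ici 0) := A_contOn ha0 hap ham hAint
  have hApos : ∀ u : ℝ, 0 < u → 0 < A u := fun u hu => A_pos ha0 hap ham hAint hu
  have hδl : ∀ τ, 0 < τ → pm * (A τ / τ) ≤ a τ := by
    intro τ hτ
    have h1 := (hδ τ hτ).1
    rw [le_div_iff₀ (hApos τ hτ)] at h1
    rw [← mul_div_assoc, div_le_iff₀ hτ]
    linarith
  have hδu : ∀ τ, 0 < τ → a τ ≤ pp * (A τ / τ) := by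
    intro τ hτ
    have h1 := (hδ τ hτ).2
    rw [div_le_iff₀ (hApos τ hτ)] at h1
    rw [← mul_div_assoc, le_div_iff₀ hτ]
    linarith
  have hlow : ∀ u v : ℝ, 0 < u → u ≤ v → A u * v ^ pm ≤ A v * u ^ pm :=
    fun u v hu huv => A_rpow_lower ha0 hap ham hAint hpm0 hδl hu huv
  -- Hinv facts
  have hinv0 : ∀ s : ℝ, 0 ≤ s → 0 ≤ Hinv s := by
    intro s hs
    obtain ⟨x, hx0, hxs⟩ := Hfun_surj hAc hApos hn hA2 hA3 hs
    rw [← hxs, hHinv₁ x hx0]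
    exact hx0
  have hinvpos : ∀ s : ℝ, 0 < s → 0 < Hinv s := by
    intro s hs
    rcases eq_or_lt_of_le (hinv0 s hs.le) with h0 | h0
    · exfalso
      have h1 := hHinv₂ s hs.le
      rw [← h0, Hfun_zero hn] at h1
      linarith
    · exact h0
  have hinvmono : ∀ s s' : ℝ, 0 ≤ s → s ≤ s' → Hinv s ≤ Hinv s' := by
    intro s s' hs hss
    by_contra hcon
    push_neg at hcon
    have h1 := hHmono (hinv0 s' (hs.trans hss)) (hinv0 s hs) hcon
    rw [hHinv₂ s hs, hHinv₂ s' (hs.trans hss)] at h1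
    linarith
  -- the core estimate
  have hcore : ∀ t : ℝ, 2 ≤ t → ∀ s : ℝ, 1 ≤ s →
      (t/2) ^ q * A (Hinv s) ≤ A (Hinv (s * t)) := by
    intro t ht s hs
    have hs0 : (0:ℝ) < s := by linarith
    have ht0 : (0:ℝ) < t := by linarith
    have hst : s ≤ s * t := le_mul_of_one_le_right hs0.le (by linarith)
    set u := Hinv s with hu'
    set v := Hinv (s * t) with hv'
    have hu : 0 < u := hinvpos s hs0
    have huv : u ≤ v := hinvmono s (s*t) hs0.le hst
    have hv : 0 < v := lt_of_lt_of_le hu huv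
    have hHu : Hfun A n u = s := hHinv₂ s hs0.le
    have hHv : Hfun A n v = s * t := hHinv₂ (s*t) (by positivity)
    set θ : ℝ := ((n:ℝ)-pm)/(n:ℝ) with hθ
    have hθpos : 0 < θ := by rw [hθ]; positivity
    have hratio := Hfun_ratio hAc hApos hn hpm hpmn hA3 hlow hu huv
    rw [hHu, hHv] at hratio
    have ht2 : t ≤ 2 * (v/u) ^ θ := by
      have h1 : s * t ≤ 2 * (v/u) ^ θ * s := hratio
      have h1' : t * s ≤ 2 * (v/u) ^ θ * s := by
        calc t * s = s * t := mul_comm t s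
          _ ≤ 2 * (v/u) ^ θ * s := h1
      exact le_of_mul_le_mul_right h1' hs0
    have ht3 : t/2 ≤ (v/u) ^ θ := by linarith
    have hw : θ * (pm / θ) = pm := by field_simp
    have hwq : pm / θ = q := by
      rw [hθ, hq]
      field_simp
    have hpow : (t/2) ^ q ≤ (v/u) ^ pm := by
      have h4 := Real.rpow_le_rpow (by linarith : (0:ℝ) ≤ t/2) ht3 (by positivity : (0:ℝ) ≤ pm/θ)
      rw [← Real.rpow_mul (div_pos hv hu).le, hw, hwq] at h4
      exact h4
    have hAcomp : A u * (v/u) ^ pm ≤ A v := by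
      rw [Real.div_rpow hv.le hu.le, mul_div_assoc']
      rw [div_le_iff₀ (Real.rpow_pos_of_pos hu pm)]
      exact hlow u v hu huv
    calc (t/2) ^ q * A u ≤ (v/u) ^ pm * A u :=
          mul_le_mul_of_nonneg_right hpow (hApos u hu).le
      _ = A u * (v/u) ^ pm := by ring
      _ ≤ A v := hAcomp
  -- main limit
  have hT0 : (0:ℝ) < max 2 (1/c) := lt_of_lt_of_le (by norm_num) (le_max_left _ _)
  apply squeeze_zero' (g := fun t : ℝ => (c * t) ^ pp / (t/2) ^ q)
  · -- nonnegativity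
    filter_upwards [eventually_ge_atTop (max 2 (1/c))] with t ht
    have ht2 : (2:ℝ) ≤ t := le_trans (le_max_left _ _) ht
    apply div_nonneg
    · exact le_trans (Real.rpow_nonneg (by nlinarith) pp) (le_max_left _ _)
    · by_cases hbd : IsBoundedUnder (· ≤ ·) atTop
        (fun s => A (Hinv (s * t)) / A (Hinv s))
      · have hM : (t/2) ^ q ≤ matus (fun s => A (Hinv s)) t := by
          rw [matus]
          apply le_limsup_of_frequently_le _ hbd
          apply Filter.Eventually.frequently
          filter_upwards [eventually_ge_atTop 1] with s hs
          have hFpos : 0 < A (Hinv s) := hApos _ (hinvpos s (by linarith))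
          rw [le_div_iff₀ hFpos]
          exact hcore t ht2 s hs
        exact le_trans (Real.rpow_nonneg (by linarith) q) hM
      · have hM0 : matus (fun s => A (Hinv s)) t = 0 := by
          rw [matus, Filter.limsup_eq]
          have hempty : {a : ℝ | ∀ᶠ s in atTop, A (Hinv (s * t)) / A (Hinv s) ≤ a} = ∅ := by
            ext b
            simp only [Set.mem_setOf_eq, Set.mem_empty_iff_false, iff_false]
            intro hb
            exact hbd ⟨b, by simpa [Filter.eventually_map] using hb⟩
          rw [hempty, Real.sInf_empty]
        rw [hM0]
  · -- upper bound
    filter_upwards [eventually_ge_atTop (max 2 (1/c))] with t ht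
    have ht2 : (2:ℝ) ≤ t := le_trans (le_max_left _ _) ht
    have ht0 : (0:ℝ) < t := by linarith
    have hct : (1:ℝ) ≤ c * t := by
      have h1 : 1/c ≤ t := le_trans (le_max_right _ _) ht
      rw [div_le_iff₀ hc] at h1
      nlinarith
    have hmax : max ((c * t) ^ pp) ((c * t) ^ pm) = (c * t) ^ pp :=
      max_eq_left (Real.rpow_le_rpow_of_exponent_le hct hpmpp)
    rw [hmax]
    have hden : (0:ℝ) < (t/2) ^ q := Real.rpow_pos_of_pos (by linarith) q
    by_cases hbd : IsBoundedUnder (· ≤ ·) atTop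
        (fun s => A (Hinv (s * t)) / A (Hinv s))
    · have hM : (t/2) ^ q ≤ matus (fun s => A (Hinv s)) t := by
        rw [matus]
        apply le_limsup_of_frequently_le _ hbd
        apply Filter.Eventually.frequently
        filter_upwards [eventually_ge_atTop 1] with s hs
        have hFpos : 0 < A (Hinv s) := hApos _ (hinvpos s (by linarith))
        rw [le_div_iff₀ hFpos]
        exact hcore t ht2 s hs
      exact div_le_div_of_nonneg_left (Real.rpow_nonneg (by nlinarith) pp) hden hM
    · have hM0 : matus (fun s => A (Hinv s)) t = 0 := by
        rw [matus, Filter.limsup_eq]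
        have hempty : {a : ℝ | ∀ᶠ s in atTop, A (Hinv (s * t)) / A (Hinv s) ≤ a} = ∅ := by
          ext b
          simp only [Set.mem_setOf_eq, Set.mem_empty_iff_false, iff_false]
          intro hb
          exact hbd ⟨b, by simpa [Filter.eventually_map] using hb⟩
        rw [hempty, Real.sInf_empty]
      rw [hM0, div_zero]
      positivity
  · -- the dominating function tends to zero
    have hlim : Tendsto (fun t : ℝ => (c ^ pp * 2 ^ q) * t ^ (pp - q)) atTop (nhds 0) := by
      have h1 : Tendsto (fun t : ℝ => t ^ (-(q - pp))) atTop (nhds 0) :=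
        tendsto_rpow_neg_atTop (by linarith)
      have h2 : Tendsto (fun t : ℝ => t ^ (pp - q)) atTop (nhds 0) := by
        convert h1 using 2
        ring_nf
      simpa using h2.const_mul (c ^ pp * 2 ^ q)
    apply Tendsto.congr' _ hlim
    filter_upwards [eventually_gt_atTop 0] with t ht
    rw [Real.mul_rpow hc.le ht.le, Real.div_rpow ht.le (by norm_num), Real.rpow_sub ht]
    field_simp
end basics
end
end

section
/- Let n ≥ 2 and let A be a Young function satisfying condition (δ) with exponents 1 < p⁻ ≤ p⁺ < n, conditions (A2) and (A3), and p⁺ < (p⁻)_*. Let A_n = A ∘ H⁻¹, let M_n(t) = M(t, A_n), and let A_∞(t) = max{t^{p⁺}, t^{p⁻}}. Let ν and μ be nonnegative finite Borel measures on ℝⁿ, and suppose there is a constant S > 0 such that the reverse Hölder inequality S·‖φ‖_{M_n,ν} ≤ ‖φ‖_{A_∞,μ} holds for every nonnegative bounded Borel measurable function φ on ℝⁿ. Then there exist a countable index set I, points {x_i}_{i∈I} ⊂ ℝⁿ, and scalars {ν_i}_{i∈I} ⊂ (0,∞) such that ν = Σ_{i∈I} ν_i·δ_{x_i}. -/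
open MeasureTheory Filter Set
open scoped ENNReal
open Topology

noncomputable section

/-- The Luxemburg norm of `u` with respect to the Young function `B` and the measure `ν`. -/
def luxNorm {α : Type*} [MeasurableSpace α] (B : ℝ → ℝ) (ν : Measure α) (u : α → ℝ) : ℝ :=
  sInf {l : ℝ | 0 < l ∧ ∫ x, B (|u x| / l) ∂ν ≤ 1}

lemma repr_lemma {α : Type*} [MeasurableSpace α] [MeasurableSingletonClass α]
    (ν : Measure α) (D : Set α) (hDm : MeasurableSet D)
    (hDc : D.Countable) (hnull : ν Dᶜ = 0) :
    ν = Measure.sum (fun i : D => ν {(i:α)} • Measure.dirac (i:α)) := by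
  have : Countable D := hDc.to_subtype
  ext E hE
  have h1 : ν E = ν (E ∩ D) := by
    have h0 : ν (E \ D) = 0 := measure_mono_null (fun x hx => hx.2) hnull
    rw [← measure_inter_add_diff E hDm, h0, add_zero]
  have h2 : ν (E ∩ D) = ∑' (x : ↥(E ∩ D)), ν {(x:α)} := by
    rw [← measure_biUnion (hDc.mono inter_subset_right) ?_ (fun x _ => measurableSet_singleton x)]
    · congr 1
      ext y
      simp
    · intro x _ y _ hxy
      simp [Function.onFun, hxy]
  rw [Measure.sum_apply _ hE, h1, h2]
  have h3 : ∀ i : D, (ν {(i:α)} • Measure.dirac (i:α)) E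
      = E.indicator (fun x => ν {x}) (i:α) := by
    intro i
    rw [Measure.smul_apply, smul_eq_mul, Measure.dirac_apply' _ hE]
    by_cases h : (i:α) ∈ E <;> simp [h]
  calc (∑' (x : ↥(E ∩ D)), ν {(x:α)}) = ∑' x, (E ∩ D).indicator (fun y => ν {y}) x :=
        tsum_subtype (E ∩ D) (fun y => ν {y})
    _ = ∑' x, D.indicator (E.indicator fun y => ν {y}) x := by
        rw [Set.indicator_indicator, Set.inter_comm]
    _ = ∑' (i : D), E.indicator (fun y => ν {y}) (i:α) := (tsum_subtype D (E.indicator fun y => ν {y})).symm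
    _ = ∑' (i : D), (ν {(i:α)} • Measure.dirac (i:α)) E := by
        exact tsum_congr fun i => (h3 i).symm

lemma cover_small {α : Type*} [MetricSpace α] [SecondCountableTopology α]
    [MeasurableSpace α] [OpensMeasurableSpace α] [Nonempty α]
    (ρ : Measure α) [IsFiniteMeasure ρ] [NullSingletonClass ρ] {ε : ℝ≥0∞} (hε : 0 < ε) :
    ∃ F : ℕ → Set α, (∀ i, MeasurableSet (F i)) ∧ Pairwise (Function.onFun Disjoint F) ∧
      (⋃ i, F i) = univ ∧ ∀ i, ρ (F i) ≤ ε := by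
  have hx : ∀ x : α, ∃ r : ℝ, 0 < r ∧ ρ (Metric.ball x r) ≤ ε := by
    intro x
    have h2 : (⋂ k : ℕ, Metric.closedBall x (1/((k:ℝ)+1))) = {x} := by
      apply Subset.antisymm
      · intro y hy
        simp only [Set.mem_iInter, Metric.mem_closedBall] at hy
        have hd : dist y x ≤ 0 :=
          ge_of_tendsto' tendsto_one_div_add_atTop_nhds_zero_nat fun k => hy k
        simpa [Set.mem_singleton_iff] using dist_le_zero.mp hd
      · intro y hy
        simp only [Set.mem_singleton_iff] at hy
        subst hy
        refine Set.mem_iInter.mpr fun k => Metric.mem_closedBall_self (by positivity)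
    have h1 : Tendsto (fun k : ℕ => ρ (Metric.closedBall x (1/((k:ℝ)+1)))) atTop
        (𝓝 (ρ (⋂ k : ℕ, Metric.closedBall x (1/((k:ℝ)+1))))) := by
      refine tendsto_measure_iInter_atTop (fun k => Metric.isClosed_closedBall.measurableSet.nullMeasurableSet) ?_
        ⟨0, measure_ne_top _ _⟩
      intro i j hij
      apply Metric.closedBall_subset_closedBall
      have : (i:ℝ) + 1 ≤ (j:ℝ) + 1 := by exact_mod_cast by omega
      exact one_div_le_one_div_of_le (by positivity) this
    rw [h2, measure_singleton] at h1
    have := h1.eventually_lt_const hε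
    obtain ⟨k, hk⟩ := this.exists
    exact ⟨1/((k:ℝ)+1), by positivity,
      (measure_mono Metric.ball_subset_closedBall).trans hk.le⟩
  choose r hrpos hrε using hx
  obtain ⟨t, htc, htU⟩ := TopologicalSpace.isOpen_iUnion_countable
    (fun x => Metric.ball x (r x)) (fun x => Metric.isOpen_ball)
  have huniv : ⋃ x ∈ t, Metric.ball x (r x) = univ := by
    rw [htU]
    apply Subset.antisymm (subset_univ _)
    intro y _
    exact Set.mem_iUnion.mpr ⟨y, Metric.mem_ball_self (hrpos y)⟩
  have htne : t.Nonempty := by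
    rcases Set.eq_empty_or_nonempty t with h | h
    · exfalso
      rw [h] at huniv
      simp only [Set.mem_empty_iff_false, Set.iUnion_of_empty, Set.iUnion_empty] at huniv
      exact (Set.univ_nonempty).ne_empty huniv.symm
    · exact h
  obtain ⟨u, hu⟩ := Set.Countable.exists_eq_range htc htne
  refine ⟨disjointed (fun i => Metric.ball (u i) (r (u i))), ?_, disjoint_disjointed _, ?_, ?_⟩
  · exact MeasurableSet.disjointed fun i => Metric.isOpen_ball.measurableSet
  · rw [iUnion_disjointed]
    rw [← huniv, hu]
    exact (Set.biUnion_range (f := u) (g := fun x => Metric.ball x (r x))).symm ▸ rfl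
  · intro i
    exact (measure_mono (disjointed_subset _ _)).trans (hrε (u i))

lemma matus_bounds (An : ℝ → ℝ) (q Q : ℝ) (hq : 0 < q)
    (hpos : ∀ s, 0 < s → 0 < An s)
    (hlow : ∀ s, 0 < s → ∀ lam, 1 ≤ lam → lam ^ q * An s ≤ An (lam * s))
    (hupp : ∀ s, 0 < s → ∀ lam, 1 ≤ lam → An (lam * s) ≤ lam ^ Q * An s) :
    (∀ t, 1 ≤ t → t ^ q ≤ matus An t) ∧ (∀ t, 0 < t → t ≤ 1 → matus An t ≤ t ^ q) := by
  have hrat_nonneg : ∀ t, 0 < t → ∀ s : ℝ, 0 < s → 0 ≤ An (s * t) / An s := by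
    intro t ht s hs
    exact div_nonneg (hpos _ (by positivity)).le (hpos _ hs).le
  have hlimsup : ∀ t : ℝ, matus An t = sInf {c | ∀ᶠ s in atTop, An (s * t) / An s ≤ c} :=
    fun t => Filter.limsup_eq
  constructor
  · intro t ht
    rw [hlimsup]
    have ht0 : 0 < t := lt_of_lt_of_le zero_lt_one ht
    -- every s > 0 : ratio ∈ [t^q, t^Q]
    have hub : ∀ s : ℝ, 0 < s → An (s * t) / An s ≤ t ^ Q := by
      intro s hs
      rw [div_le_iff₀ (hpos s hs), mul_comm s t]
      exact hupp s hs t ht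
    have hlb : ∀ s : ℝ, 0 < s → t ^ q ≤ An (s * t) / An s := by
      intro s hs
      rw [le_div_iff₀ (hpos s hs), mul_comm s t]
      exact hlow s hs t ht
    apply le_csInf
    · exact ⟨t ^ Q, (eventually_gt_atTop 0).mono fun s hs => hub s hs⟩
    · intro c hc
      obtain ⟨s, hsc, hs0⟩ := (hc.and (eventually_gt_atTop 0)).exists
      exact le_trans (hlb s hs0) hsc
  · intro t ht0 ht1
    rw [hlimsup]
    have hub : ∀ s : ℝ, 0 < s → An (s * t) / An s ≤ t ^ q := by
      intro s hs
      have hst : 0 < s * t := by positivity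
      have h1t : 1 ≤ 1 / t := by
        rw [le_one_div (by norm_num) ht0]; simpa using ht1
      have := hlow (s * t) hst (1 / t) h1t
      have heq : (1 / t) * (s * t) = s := by field_simp
      rw [heq] at this
      have h2 : (1/t) ^ q = (t ^ q)⁻¹ := by
        rw [one_div, Real.inv_rpow ht0.le]
      rw [h2] at this
      rw [div_le_iff₀ (hpos s hs)]
      have htq : (0:ℝ) < t ^ q := Real.rpow_pos_of_pos ht0 _
      calc An (s * t) = t ^ q * ((t ^ q)⁻¹ * An (s * t)) := by field_simp
        _ ≤ t ^ q * An s := by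
            apply mul_le_mul_of_nonneg_left this htq.le
    apply csInf_le
    · refine ⟨0, fun c hc => ?_⟩
      obtain ⟨s, hsc, hs0⟩ := (hc.and (eventually_gt_atTop 0)).exists
      exact le_trans (hrat_nonneg t ht0 s hs0) hsc
    · exact (eventually_gt_atTop 0).mono fun s hs => hub s hs

lemma lux_integral_indicator {α : Type*} [MeasurableSpace α] (ν : Measure α)
    (B : ℝ → ℝ) (hB0 : B 0 = 0) {E : Set α} (hE : MeasurableSet E) (l : ℝ) :
    ∫ x, B (|E.indicator (fun _ => (1:ℝ)) x| / l) ∂ν = (ν E).toReal * B (1 / l) := by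
  have : (fun x => B (|E.indicator (fun _ => (1:ℝ)) x| / l)) =
      E.indicator (fun _ => B (1 / l)) := by
    funext x
    by_cases hx : x ∈ E <;> simp [Set.indicator_of_mem, Set.indicator_of_notMem, hx, hB0]
  rw [this, integral_indicator_const _ hE, smul_eq_mul, mul_comm]; exact mul_comm _ _

lemma luxNorm_indicator_lower {α : Type*} [MeasurableSpace α] (ν : Measure α)
    (B : ℝ → ℝ) (q : ℝ) (hq : 0 < q) (hB0 : B 0 = 0)
    (hBlow : ∀ t, 1 ≤ t → t ^ q ≤ B t) (hBupp : ∀ t, 0 < t → t ≤ 1 → B t ≤ t ^ q)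
    {E : Set α} (hE : MeasurableSet E) (hm1 : (ν E).toReal ≤ 1) :
    ((ν E).toReal) ^ (1/q) ≤ luxNorm B ν (E.indicator fun _ => (1:ℝ)) := by
  set m := (ν E).toReal with hm
  have hm0 : 0 ≤ m := ENNReal.toReal_nonneg
  apply le_csInf
  · -- nonempty : l₀ = max 1 (m^(1/q))
    refine ⟨max 1 (m ^ (1/q)), lt_of_lt_of_le zero_lt_one (le_max_left _ _), ?_⟩
    rw [lux_integral_indicator ν B hB0 hE]
    set l₀ := max 1 (m ^ (1/q)) with hl₀
    have hl₀1 : 1 ≤ l₀ := le_max_left _ _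
    have hl₀pos : 0 < l₀ := lt_of_lt_of_le zero_lt_one hl₀1
    have h1l : 0 < 1 / l₀ := by positivity
    have h1l1 : 1 / l₀ ≤ 1 := by
      rw [div_le_one hl₀pos]; exact hl₀1
    have hBb : B (1/l₀) ≤ (1/l₀) ^ q := hBupp _ h1l h1l1
    have hl₀q : m ≤ l₀ ^ q := by
      calc m = (m ^ (1/q)) ^ q := by
            rw [← Real.rpow_mul hm0, one_div, inv_mul_cancel₀ hq.ne', Real.rpow_one]
        _ ≤ l₀ ^ q := by
            exact Real.rpow_le_rpow (Real.rpow_nonneg hm0 _) (le_max_right _ _) hq.le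
    calc m * B (1/l₀) ≤ m * (1/l₀) ^ q := by
          apply mul_le_mul_of_nonneg_left hBb hm0
      _ = m * (1 / l₀ ^ q) := by rw [Real.div_rpow zero_le_one hl₀pos.le, Real.one_rpow]
      _ ≤ 1 := by
          rw [mul_one_div, div_le_one (Real.rpow_pos_of_pos hl₀pos _)]
          exact hl₀q
  · rintro l ⟨hl0, hl⟩
    rw [lux_integral_indicator ν B hB0 hE] at hl
    rcases le_or_gt 1 l with h1 | h1
    · exact le_trans (Real.rpow_le_one hm0 hm1 (by positivity)) h1
    · have h1l : 1 ≤ 1 / l := by rw [le_div_iff₀ hl0]; simpa using h1.le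
      have hBb : (1/l) ^ q ≤ B (1/l) := hBlow _ h1l
      have : m * (1/l) ^ q ≤ 1 := le_trans (mul_le_mul_of_nonneg_left hBb hm0) hl
      have hmlq : m ≤ l ^ q := by
        rw [Real.div_rpow zero_le_one hl0.le, Real.one_rpow, mul_one_div,
          div_le_one (Real.rpow_pos_of_pos hl0 _)] at this
        exact this
      calc m ^ (1/q) ≤ (l ^ q) ^ (1/q) := Real.rpow_le_rpow hm0 hmlq (by positivity)
        _ = l := by
            rw [← Real.rpow_mul hl0.le, mul_one_div, div_self hq.ne', Real.rpow_one]

lemma luxNorm_indicator_upper_zero {α : Type*} [MeasurableSpace α] (μ : Measure α)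
    (pp pm : ℝ) (hpm : 0 < pm) (hpp : 0 < pp)
    {E : Set α} (hE : MeasurableSet E) (hM : (μ E).toReal = 0) :
    luxNorm (fun t => max (t ^ pp) (t ^ pm)) μ (E.indicator fun _ => (1:ℝ)) = 0 := by
  have hA0 : (fun t : ℝ => max (t ^ pp) (t ^ pm)) 0 = 0 := by
    show max ((0:ℝ) ^ pp) ((0:ℝ) ^ pm) = 0
    rw [Real.zero_rpow hpp.ne', Real.zero_rpow hpm.ne', max_self]
  unfold luxNorm
  have : {l : ℝ | 0 < l ∧ ∫ x, (fun t => max (t ^ pp) (t ^ pm))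
      (|E.indicator (fun _ => (1:ℝ)) x| / l) ∂μ ≤ 1} = Ioi 0 := by
    ext l
    simp only [Set.mem_setOf_eq, Set.mem_Ioi]
    constructor
    · exact fun h => h.1
    · intro hl
      refine ⟨hl, ?_⟩
      rw [lux_integral_indicator μ (fun t : ℝ => max (t ^ pp) (t ^ pm)) hA0 hE l, hM, zero_mul]
      norm_num
  rw [this, csInf_Ioi]

lemma luxNorm_indicator_upper_pos {α : Type*} [MeasurableSpace α] (μ : Measure α)
    (pp pm : ℝ) (hpm : 0 < pm) (hpp : 0 < pp)
    {E : Set α} (hE : MeasurableSet E) (hM : 0 < (μ E).toReal) :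
    luxNorm (fun t => max (t ^ pp) (t ^ pm)) μ (E.indicator fun _ => (1:ℝ))
      ≤ max (((μ E).toReal) ^ (1/pp)) (((μ E).toReal) ^ (1/pm)) := by
  have hA0 : (fun t : ℝ => max (t ^ pp) (t ^ pm)) 0 = 0 := by
    show max ((0:ℝ) ^ pp) ((0:ℝ) ^ pm) = 0
    rw [Real.zero_rpow hpp.ne', Real.zero_rpow hpm.ne', max_self]
  set M := (μ E).toReal with hMdef
  set l₁ := max (M ^ (1/pp)) (M ^ (1/pm)) with hl₁
  have hl₁pos : 0 < l₁ := lt_of_lt_of_le (Real.rpow_pos_of_pos hM (1/pp)) (le_max_left _ _)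
  apply csInf_le
  · refine ⟨0, fun c hc => hc.1.le⟩
  · refine ⟨hl₁pos, ?_⟩
    rw [lux_integral_indicator μ (fun t : ℝ => max (t ^ pp) (t ^ pm)) hA0 hE l₁]
    have key : ∀ p : ℝ, 0 < p → M ^ (1/p) ≤ l₁ → M * (1/l₁) ^ p ≤ 1 := by
      intro p hp hlp
      have hMlp : M ≤ l₁ ^ p := by
        calc M = (M ^ (1/p)) ^ p := by
              rw [← Real.rpow_mul hM.le, one_div, inv_mul_cancel₀ hp.ne', Real.rpow_one]
          _ ≤ l₁ ^ p := Real.rpow_le_rpow (Real.rpow_nonneg hM.le _) hlp hp.le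
      rw [Real.div_rpow zero_le_one hl₁pos.le, Real.one_rpow, mul_one_div,
        div_le_one (Real.rpow_pos_of_pos hl₁pos _)]
      exact hMlp
    rw [mul_max_of_nonneg _ _ hM.le]
    exact max_le (key pp hpp (le_max_left _ _)) (key pm hpm (le_max_right _ _))

variable {a A : ℝ → ℝ}

lemma young_a_nonneg (hA : IsYoungPair a A) : ∀ s, 0 ≤ s → 0 ≤ a s := by
  intro s hs
  rcases hs.eq_or_lt with h | h
  · rw [← h, hA.1]
  · exact (hA.2.1 s h).le

lemma young_intInt (hA : IsYoungPair a A) : ∀ x y : ℝ, 0 ≤ x → x ≤ y →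
    IntervalIntegrable a volume x y := by
  intro x y hx hxy
  apply MonotoneOn.intervalIntegrable
  intro u hu v hv huv
  rw [Set.uIcc_of_le hxy] at hu hv
  rcases (hx.trans hu.1).eq_or_lt with h | h
  · rw [← h, hA.1]
    exact young_a_nonneg hA v (by linarith [hv.1])
  · exact hA.2.2.2.1 h (lt_of_lt_of_le h huv) huv

lemma young_A_diff (hA : IsYoungPair a A) : ∀ x y : ℝ, 0 ≤ x → x ≤ y →
    A y = A x + ∫ τ in x..y, a τ := by
  intro x y hx hxy
  rw [hA.2.2.2.2 x hx, hA.2.2.2.2 y (hx.trans hxy),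
    ← intervalIntegral.integral_add_adjacent_intervals (young_intInt hA 0 x le_rfl hx)
      (young_intInt hA x y hx hxy)]

lemma young_A_zero (hA : IsYoungPair a A) : A 0 = 0 := by
  rw [hA.2.2.2.2 0 le_rfl, intervalIntegral.integral_same]

lemma young_A_pos (hA : IsYoungPair a A) : ∀ t, 0 < t → 0 < A t := by
  intro t ht
  rw [hA.2.2.2.2 t ht.le]
  exact intervalIntegral.intervalIntegral_pos_of_pos_on (young_intInt hA 0 t le_rfl ht.le)
    (fun x hx => hA.2.1 x hx.1) ht

lemma young_A_mono (hA : IsYoungPair a A) : ∀ x y, 0 ≤ x → x ≤ y → A x ≤ A y := by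
  intro x y hx hxy
  rw [young_A_diff hA x y hx hxy]
  have : 0 ≤ ∫ τ in x..y, a τ :=
    intervalIntegral.integral_nonneg hxy (fun u hu => young_a_nonneg hA u (hx.trans hu.1))
  linarith

lemma young_A_contOn (hA : IsYoungPair a A) : ContinuousOn A (Ici 0) := by
  intro t ht
  have hInt : IntegrableOn a (uIcc 0 (t+1)) volume := by
    rw [Set.uIcc_of_le (by linarith [mem_Ici.mp ht] : (0:ℝ) ≤ t + 1)]
    rw [integrableOn_Icc_iff_integrableOn_Ioc]
    exact (intervalIntegrable_iff_integrableOn_Ioc_of_le (by linarith [mem_Ici.mp ht])).mp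
      (young_intInt hA 0 (t+1) le_rfl (by linarith [mem_Ici.mp ht]))
  have hP : ContinuousOn (fun u => ∫ τ in (0:ℝ)..u, a τ) (uIcc 0 (t+1)) :=
    intervalIntegral.continuousOn_primitive_interval hInt
  have hA' : ContinuousOn A (Icc 0 (t+1)) := by
    rw [Set.uIcc_of_le (by linarith [mem_Ici.mp ht] : (0:ℝ) ≤ t + 1)] at hP
    exact hP.congr (fun u hu => hA.2.2.2.2 u hu.1)
  have ht' : t ∈ Icc (0:ℝ) (t+1) := ⟨mem_Ici.mp ht, by linarith⟩
  refine (hA' t ht').mono_of_mem_nhdsWithin ?_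
  have : Ici (0:ℝ) ∩ Iio (t+1) ⊆ Icc 0 (t+1) := fun u hu => ⟨hu.1, hu.2.le⟩
  exact Filter.mem_of_superset (inter_mem_nhdsWithin _ (Iio_mem_nhds (by linarith))) this

lemma young_A_deriv (hA : IsYoungPair a A) : ∀ t, 0 < t → HasDerivWithinAt A (a t) (Ici t) t := by
  intro t ht
  have hmeas : StronglyMeasurableAtFilter a (𝓝[Ioi t] t) := by
    refine ⟨Ioi t, self_mem_nhdsWithin, ?_⟩
    set ab : ℝ → ℝ := fun τ => if τ ≤ 0 then 0 else a τ with hab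
    have habm : Monotone ab := by
      intro u v huv
      by_cases hu : u ≤ 0 <;> by_cases hv : v ≤ 0 <;> simp [hab, hu, hv]
      · exact (hA.2.1 v (not_le.mp hv)).le
      · exact absurd (huv.trans hv) hu
      · exact hA.2.2.2.1 (not_le.mp hu) (not_le.mp hv) huv
    refine (habm.measurable.aestronglyMeasurable).congr ?_
    refine ((ae_restrict_mem measurableSet_Ioi).mono fun τ hτ => ?_)
    have : ¬ τ ≤ 0 := by
      simp only [not_le]; exact lt_trans ht hτ
    simp [hab, this]
  have h1 : HasDerivWithinAt (fun u => ∫ τ in (0:ℝ)..u, a τ) (a t) (Ici t) t :=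
    intervalIntegral.integral_hasDerivWithinAt_right
      (young_intInt hA 0 t le_rfl ht.le) hmeas ((hA.2.2.1 t ht.le).mono Ioi_subset_Ici_self)
  exact h1.congr (fun u hu => hA.2.2.2.2 u (ht.le.trans hu)) (hA.2.2.2.2 t ht.le)

lemma young_scale (hA : IsYoungPair a A) {pm pp : ℝ} (hpm : 0 < pm)
    (hδ : ∀ t, 0 < t → pm ≤ t * a t / A t ∧ t * a t / A t ≤ pp) :
    ∀ x y, 0 < x → x ≤ y → A y ≤ A x * (y/x) ^ pp ∧ A x * (y/x) ^ pm ≤ A y := by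
  intro x y hx hxy
  have hy : 0 < y := lt_of_lt_of_le hx hxy
  have hAx : 0 < A x := young_A_pos hA x hx
  have hAy : 0 < A y := young_A_pos hA y hy
  have hApos' : ∀ t ∈ Icc x y, 0 < A t := fun t htc => young_A_pos hA t (lt_of_lt_of_le hx htc.1)
  have hlogA : ContinuousOn (fun t => Real.log (A t)) (Icc x y) := by
    refine ContinuousOn.log ?_ (fun t htc => (hApos' t htc).ne')
    exact (young_A_contOn hA).mono (fun u hu => le_trans hx.le hu.1)
  have hlogA' : ∀ t ∈ Ico x y, HasDerivWithinAt (fun u => Real.log (A u)) (a t / A t) (Ici t) t := by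
    intro t htc
    have htpos : 0 < t := lt_of_lt_of_le hx htc.1
    exact (young_A_deriv hA t htpos).log (young_A_pos hA t htpos).ne'
  have hlogt : ContinuousOn (fun t : ℝ => Real.log t) (Icc x y) := by
    refine ContinuousOn.log continuousOn_id (fun t htc => ?_)
    exact (lt_of_lt_of_le hx htc.1).ne'
  have hx' : x ∈ Icc x y := ⟨le_rfl, hxy⟩
  have hy' : y ∈ Icc x y := ⟨hxy, le_rfl⟩
  have main : ∀ p : ℝ, 0 < p → (∀ t, 0 < t → a t / A t ≤ p / t) →
      Real.log (A y) ≤ Real.log (A x) + p * (Real.log y - Real.log x) := by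
    intro p hp hbound
    have hB : ContinuousOn (fun t => Real.log (A x) + p * (Real.log t - Real.log x)) (Icc x y) :=
      continuousOn_const.add ((hlogt.sub continuousOn_const).const_smul p)
    have hB' : ∀ t ∈ Ico x y, HasDerivWithinAt
        (fun u => Real.log (A x) + p * (Real.log u - Real.log x)) (p * t⁻¹) (Ici t) t := by
      intro t htc
      have htpos : 0 < t := lt_of_lt_of_le hx htc.1
      exact ((((Real.hasDerivAt_log htpos.ne').sub_const _).const_mul p).const_add
        _).hasDerivWithinAt
    have := image_le_of_deriv_right_le_deriv_boundary hlogA hlogA'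
      (by simp : Real.log (A x) ≤ Real.log (A x) + p * (Real.log x - Real.log x)) hB hB' ?_ hy'
    · simpa using this
    · intro t htc
      have htpos : 0 < t := lt_of_lt_of_le hx htc.1
      calc a t / A t ≤ p / t := hbound t htpos
        _ = p * t⁻¹ := by rw [div_eq_mul_inv]
  have mainrev : ∀ p : ℝ, 0 < p → (∀ t, 0 < t → p / t ≤ a t / A t) →
      Real.log (A x) + p * (Real.log y - Real.log x) ≤ Real.log (A y) := by
    intro p hp hbound
    have hB : ContinuousOn (fun t => Real.log (A x) + p * (Real.log t - Real.log x)) (Icc x y) :=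
      continuousOn_const.add ((hlogt.sub continuousOn_const).const_smul p)
    have hB' : ∀ t ∈ Ico x y, HasDerivWithinAt
        (fun u => Real.log (A x) + p * (Real.log u - Real.log x)) (p * t⁻¹) (Ici t) t := by
      intro t htc
      have htpos : 0 < t := lt_of_lt_of_le hx htc.1
      exact ((((Real.hasDerivAt_log htpos.ne').sub_const _).const_mul p).const_add
        _).hasDerivWithinAt
    have := image_le_of_deriv_right_le_deriv_boundary hB hB'
      (by simp : Real.log (A x) + p * (Real.log x - Real.log x) ≤ Real.log (A x)) hlogA hlogA' ?_ hy'
    · simpa using this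
    · intro t htc
      have htpos : 0 < t := lt_of_lt_of_le hx htc.1
      calc p * t⁻¹ = p / t := by rw [div_eq_mul_inv]
        _ ≤ a t / A t := hbound t htpos
  have hyx : 0 < y / x := by positivity
  have hlogyx : Real.log (y / x) = Real.log y - Real.log x := Real.log_div hy.ne' hx.ne'
  constructor
  · -- A y ≤ A x * (y/x)^pp
    have h1 : Real.log (A y) ≤ Real.log (A x) + pp * (Real.log y - Real.log x) := by
      apply main pp (lt_of_lt_of_le hpm ?_) ?_
      · obtain ⟨h1, h2⟩ := hδ 1 zero_lt_one
        linarith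
      · intro t htpos
        have hAt : 0 < A t := young_A_pos hA t htpos
        have h := (hδ t htpos).2
        rw [div_le_iff₀ hAt] at h
        rw [div_le_div_iff₀ hAt htpos]
        calc a t * t = t * a t := mul_comm _ _
          _ ≤ pp * A t := h
    have h2 : Real.log (A x * (y/x) ^ pp) = Real.log (A x) + pp * (Real.log y - Real.log x) := by
      rw [Real.log_mul hAx.ne' (Real.rpow_pos_of_pos hyx _).ne', Real.log_rpow hyx, hlogyx]
    rw [← h2] at h1
    exact (Real.log_le_log_iff hAy (by positivity)).mp h1
  · have h1 : Real.log (A x) + pm * (Real.log y - Real.log x) ≤ Real.log (A y) := by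
      apply mainrev pm hpm
      intro t htpos
      have hAt : 0 < A t := young_A_pos hA t htpos
      have h := (hδ t htpos).1
      rw [le_div_iff₀ hAt] at h
      rw [div_le_div_iff₀ htpos hAt]
      calc pm * A t ≤ t * a t := h
        _ = a t * t := mul_comm _ _
    have h2 : Real.log (A x * (y/x) ^ pm) = Real.log (A x) + pm * (Real.log y - Real.log x) := by
      rw [Real.log_mul hAx.ne' (Real.rpow_pos_of_pos hyx _).ne', Real.log_rpow hyx, hlogyx]
    rw [← h2] at h1
    exact (Real.log_le_log_iff (by positivity) hAy).mp h1

set_option maxHeartbeats 1000000 in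
lemma An_scale (n : ℕ) (hn : 2 ≤ n) {a A : ℝ → ℝ} {pm pp : ℝ}
    (hA : IsYoungPair a A) (hpm : 1 < pm) (hpmpp : pm ≤ pp) (hppn : pp < n)
    (hδ : ∀ t, 0 < t → pm ≤ t * a t / A t ∧ t * a t / A t ≤ pp)
    (hA2 : ∃ K : ℝ, 0 < K ∧
      ¬ IntegrableOn (fun t : ℝ => (t / A t) ^ ((1:ℝ) / ((n:ℝ) - 1))) (Set.Ioi K) volume)
    (hA3 : ∃ d : ℝ, 0 < d ∧
      IntegrableOn (fun t : ℝ => (t / A t) ^ ((1:ℝ) / ((n:ℝ) - 1))) (Set.Ioc 0 d) volume)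
    (hHmono : StrictMonoOn (Hfun A n) (Set.Ici 0))
    (Hinv : ℝ → ℝ)
    (hHinv₁ : ∀ t, 0 ≤ t → Hinv (Hfun A n t) = t)
    (hHinv₂ : ∀ s, 0 ≤ s → Hfun A n (Hinv s) = s) :
    (∀ s : ℝ, 0 < s → 0 < Hinv s) ∧
    (∀ s : ℝ, 0 < s → ∀ lam, 1 ≤ lam →
      lam ^ ((n:ℝ)*pm/((n:ℝ)-pm)) * A (Hinv s) ≤ A (Hinv (lam * s)) ∧
      A (Hinv (lam * s)) ≤ lam ^ ((n:ℝ)*pp/((n:ℝ)-pp)) * A (Hinv s)) := by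
  have hn2 : (2:ℝ) ≤ (n:ℝ) := by exact_mod_cast hn
  have hn1 : (1:ℝ) ≤ (n:ℝ) - 1 := by linarith
  have hn1pos : (0:ℝ) < (n:ℝ) - 1 := by linarith
  have hnpos : (0:ℝ) < (n:ℝ) := by linarith
  set κ : ℝ := (1:ℝ) / ((n:ℝ) - 1) with hκdef
  have hκ : 0 < κ := by positivity
  have hpm0 : 0 < pm := lt_trans zero_lt_one hpm
  have hpp0 : 0 < pp := lt_of_lt_of_le hpm0 hpmpp
  have hpmn : pm < (n:ℝ) := lt_of_le_of_lt hpmpp hppn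
  set g : ℝ → ℝ := fun τ => (τ / A τ) ^ κ with hgdef
  set G : ℝ → ℝ := fun t => ∫ τ in (0:ℝ)..t, g τ with hGdef
  have hHG : ∀ t : ℝ, Hfun A n t = (G t) ^ (((n:ℝ) - 1) / (n:ℝ)) := fun t => rfl
  set β : ℝ := ((n:ℝ) - pm) / ((n:ℝ) - 1) with hβdef
  set β' : ℝ := ((n:ℝ) - pp) / ((n:ℝ) - 1) with hβ'def
  have hβ : 0 < β := by
    apply div_pos <;> linarith
  have hβ' : 0 < β' := by
    apply div_pos <;> linarith
  set r1 : ℝ := (1 - pm) * κ with hr1def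
  set r2 : ℝ := (1 - pp) * κ with hr2def
  have hr1 : -1 < r1 := by
    rw [hr1def, hκdef]
    rw [neg_lt]
    calc -((1 - pm) * (1/((n:ℝ)-1))) = (pm - 1) / ((n:ℝ)-1) := by ring
      _ < 1 := by
        rw [div_lt_one hn1pos]; linarith
  have hr2 : -1 < r2 := by
    rw [hr2def, hκdef]
    rw [neg_lt]
    calc -((1 - pp) * (1/((n:ℝ)-1))) = (pp - 1) / ((n:ℝ)-1) := by ring
      _ < 1 := by
        rw [div_lt_one hn1pos]; linarith
  have hr1β : r1 + 1 = β := by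
    rw [hr1def, hβdef, hκdef]; field_simp; ring
  have hr2β : r2 + 1 = β' := by
    rw [hr2def, hβ'def, hκdef]; field_simp; ring
  -- nonnegativity and positivity of g
  have hAnn : ∀ τ : ℝ, 0 ≤ τ → 0 ≤ A τ := by
    intro τ hτ
    rcases hτ.eq_or_lt with h | h
    · rw [← h, young_A_zero hA]
    · exact (young_A_pos hA τ h).le
  have hgnn : ∀ τ : ℝ, 0 ≤ τ → 0 ≤ g τ := by
    intro τ hτ
    exact Real.rpow_nonneg (div_nonneg hτ (hAnn τ hτ)) _
  have hgpos : ∀ τ : ℝ, 0 < τ → 0 < g τ := by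
    intro τ hτ
    exact Real.rpow_pos_of_pos (div_pos hτ (young_A_pos hA τ hτ)) _
  have hg0 : g 0 = 0 := by
    rw [hgdef]
    simp only [zero_div]
    exact Real.zero_rpow hκ.ne'
  have hgcont : ∀ τ : ℝ, 0 < τ → ContinuousAt g τ := by
    intro τ hτ
    have hAc : ContinuousAt A τ :=
      (young_A_contOn hA τ (le_of_lt hτ)).continuousAt (Ici_mem_nhds hτ)
    have hdiv : ContinuousAt (fun u => u / A u) τ :=
      continuousAt_id.div hAc (young_A_pos hA τ hτ).ne'
    exact hdiv.rpow_const (Or.inl (div_pos hτ (young_A_pos hA τ hτ)).ne')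
  obtain ⟨d, hd, hgd⟩ := hA3
  have hInt : ∀ t : ℝ, IntegrableOn g (Ioc 0 t) volume := by
    intro t
    rcases le_or_gt t d with h | h
    · exact hgd.mono_set (Set.Ioc_subset_Ioc le_rfl h)
    · have h2 : IntegrableOn g (Ioc d t) volume := by
        have hc : ContinuousOn g (Icc d t) := fun τ hτ =>
          (hgcont τ (lt_of_lt_of_le hd hτ.1)).continuousWithinAt
        exact (hc.integrableOn_Icc).mono_set Set.Ioc_subset_Icc_self
      rw [← Set.Ioc_union_Ioc_eq_Ioc hd.le h.le]
      exact hgd.union h2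
  have hgII : ∀ x y : ℝ, 0 ≤ x → x ≤ y → IntervalIntegrable g volume x y := by
    intro x y hx hxy
    rw [intervalIntegrable_iff_integrableOn_Ioc_of_le hxy]
    exact (hInt y).mono_set (fun u hu => ⟨lt_of_le_of_lt hx hu.1, hu.2⟩)
  have hGdiff : ∀ x y : ℝ, 0 ≤ x → x ≤ y → G y = G x + ∫ τ in x..y, g τ := by
    intro x y hx hxy
    rw [hGdef]
    simp only
    rw [← intervalIntegral.integral_add_adjacent_intervals (hgII 0 x le_rfl hx) (hgII x y hx hxy)]
  have hG0 : G 0 = 0 := intervalIntegral.integral_same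
  have hGpos : ∀ t : ℝ, 0 < t → 0 < G t := by
    intro t ht
    exact intervalIntegral.intervalIntegral_pos_of_pos_on (hgII 0 t le_rfl ht.le)
      (fun τ hτ => hgpos τ hτ.1) ht
  -- pointwise comparison identity
  have hexpr : ∀ p t τ : ℝ, 0 < t → 0 < τ → τ / (A t * (τ/t) ^ p) = t^p / A t * τ^(1-p) := by
    intro p t τ ht hτ
    have hAt : 0 < A t := young_A_pos hA t ht
    rw [Real.div_rpow hτ.le ht.le, Real.rpow_sub hτ, Real.rpow_one]
    have h1 : (0:ℝ) < τ ^ p := Real.rpow_pos_of_pos hτ _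
    have h2 : (0:ℝ) < t ^ p := Real.rpow_pos_of_pos ht _
    field_simp
  have hc1pos : ∀ t : ℝ, 0 < t → 0 < (t^pm / A t) ^ κ := by
    intro t ht
    exact Real.rpow_pos_of_pos (div_pos (Real.rpow_pos_of_pos ht _) (young_A_pos hA t ht)) _
  have hc2pos : ∀ t : ℝ, 0 < t → 0 < (t^pp / A t) ^ κ := by
    intro t ht
    exact Real.rpow_pos_of_pos (div_pos (Real.rpow_pos_of_pos ht _) (young_A_pos hA t ht)) _
  have hrw1 : ∀ t τ : ℝ, 0 < t → 0 < τ →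
      (t^pm / A t * τ^(1-pm)) ^ κ = (t^pm / A t) ^ κ * τ ^ r1 := by
    intro t τ ht hτ
    rw [Real.mul_rpow (div_nonneg (Real.rpow_nonneg ht.le _) (hAnn t ht.le))
      (Real.rpow_nonneg hτ.le _), ← Real.rpow_mul hτ.le]
  have hrw2 : ∀ t τ : ℝ, 0 < t → 0 < τ →
      (t^pp / A t * τ^(1-pp)) ^ κ = (t^pp / A t) ^ κ * τ ^ r2 := by
    intro t τ ht hτ
    rw [Real.mul_rpow (div_nonneg (Real.rpow_nonneg ht.le _) (hAnn t ht.le))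
      (Real.rpow_nonneg hτ.le _), ← Real.rpow_mul hτ.le]
  have hup1 : ∀ t τ : ℝ, 0 < t → t ≤ τ → g τ ≤ (t^pm / A t) ^ κ * τ ^ r1 := by
    intro t τ ht htτ
    have hτ : 0 < τ := lt_of_lt_of_le ht htτ
    have hAτ : 0 < A τ := young_A_pos hA τ hτ
    have hsc := (young_scale hA hpm0 hδ t τ ht htτ).2
    have hden : 0 < A t * (τ/t) ^ pm := by
      have hAt := young_A_pos hA t ht
      have hx : (0:ℝ) < (τ/t) ^ pm := Real.rpow_pos_of_pos (div_pos hτ ht) _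
      positivity
    have h1 : τ / A τ ≤ τ / (A t * (τ/t) ^ pm) :=
      div_le_div_of_nonneg_left hτ.le hden hsc
    rw [hexpr pm t τ ht hτ] at h1
    calc g τ ≤ (t^pm / A t * τ^(1-pm)) ^ κ :=
          Real.rpow_le_rpow (div_nonneg hτ.le hAτ.le) h1 hκ.le
      _ = (t^pm / A t) ^ κ * τ ^ r1 := hrw1 t τ ht hτ
  have hlow1 : ∀ t τ : ℝ, 0 < t → 0 < τ → τ ≤ t → (t^pm / A t) ^ κ * τ ^ r1 ≤ g τ := by
    intro t τ ht hτ hτt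
    have hAτ : 0 < A τ := young_A_pos hA τ hτ
    have hsc := (young_scale hA hpm0 hδ τ t hτ hτt).2
    -- A τ * (t/τ)^pm ≤ A t  ⟹  A τ ≤ A t * (τ/t)^pm
    have hscale : A τ ≤ A t * (τ/t) ^ pm := by
      have hx : (0:ℝ) < (t/τ) ^ pm := Real.rpow_pos_of_pos (div_pos ht hτ) _
      rw [← le_div_iff₀ hx] at hsc
      calc A τ ≤ A t / (t/τ) ^ pm := hsc
        _ = A t * (τ/t) ^ pm := by
            rw [Real.div_rpow ht.le hτ.le, Real.div_rpow hτ.le ht.le, div_div_eq_mul_div,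
              mul_div_assoc]
    have hden : 0 < A t * (τ/t) ^ pm := lt_of_lt_of_le hAτ hscale
    have h1 : τ / (A t * (τ/t) ^ pm) ≤ τ / A τ :=
      div_le_div_of_nonneg_left hτ.le hAτ hscale
    rw [hexpr pm t τ ht hτ] at h1
    calc (t^pm / A t) ^ κ * τ ^ r1 = (t^pm / A t * τ^(1-pm)) ^ κ := (hrw1 t τ ht hτ).symm
      _ ≤ g τ := Real.rpow_le_rpow (by
          have h2 : (0:ℝ) < t^pm / A t * τ^(1-pm) := by
            have := young_A_pos hA t ht
            have h3 : (0:ℝ) < t ^ pm := Real.rpow_pos_of_pos ht _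
            have h4 : (0:ℝ) < τ ^ (1-pm) := Real.rpow_pos_of_pos hτ _
            positivity
          exact h2.le) h1 hκ.le
  have hup2 : ∀ t τ : ℝ, 0 < t → t ≤ τ → (t^pp / A t) ^ κ * τ ^ r2 ≤ g τ := by
    intro t τ ht htτ
    have hτ : 0 < τ := lt_of_lt_of_le ht htτ
    have hAτ : 0 < A τ := young_A_pos hA τ hτ
    have hscale : A τ ≤ A t * (τ/t) ^ pp := (young_scale hA hpm0 hδ t τ ht htτ).1
    have h1 : τ / (A t * (τ/t) ^ pp) ≤ τ / A τ :=
      div_le_div_of_nonneg_left hτ.le hAτ hscale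
    rw [hexpr pp t τ ht hτ] at h1
    calc (t^pp / A t) ^ κ * τ ^ r2 = (t^pp / A t * τ^(1-pp)) ^ κ := (hrw2 t τ ht hτ).symm
      _ ≤ g τ := Real.rpow_le_rpow (by
          have h2 : (0:ℝ) < t^pp / A t * τ^(1-pp) := by
            have := young_A_pos hA t ht
            have h3 : (0:ℝ) < t ^ pp := Real.rpow_pos_of_pos ht _
            have h4 : (0:ℝ) < τ ^ (1-pp) := Real.rpow_pos_of_pos hτ _
            positivity
          exact h2.le) h1 hκ.le
  have hlow2 : ∀ t τ : ℝ, 0 < t → 0 < τ → τ ≤ t → g τ ≤ (t^pp / A t) ^ κ * τ ^ r2 := by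
    intro t τ ht hτ hτt
    have hAτ : 0 < A τ := young_A_pos hA τ hτ
    have hsc := (young_scale hA hpm0 hδ τ t hτ hτt).1
    -- A t ≤ A τ * (t/τ)^pp ⟹ A t * (τ/t)^pp ≤ A τ
    have hscale : A t * (τ/t) ^ pp ≤ A τ := by
      have hx : (0:ℝ) < (t/τ) ^ pp := Real.rpow_pos_of_pos (div_pos ht hτ) _
      rw [← div_le_iff₀ hx] at hsc
      calc A t * (τ/t) ^ pp = A t / (t/τ) ^ pp := by
            rw [Real.div_rpow ht.le hτ.le, Real.div_rpow hτ.le ht.le, div_div_eq_mul_div,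
              mul_div_assoc]
        _ ≤ A τ := hsc
    have hden : 0 < A t * (τ/t) ^ pp := by
      have hAt := young_A_pos hA t ht
      have hx : (0:ℝ) < (τ/t) ^ pp := Real.rpow_pos_of_pos (div_pos hτ ht) _
      positivity
    have h1 : τ / A τ ≤ τ / (A t * (τ/t) ^ pp) :=
      div_le_div_of_nonneg_left hτ.le hden hscale
    rw [hexpr pp t τ ht hτ] at h1
    calc g τ ≤ (t^pp / A t * τ^(1-pp)) ^ κ :=
          Real.rpow_le_rpow (div_nonneg hτ.le hAτ.le) h1 hκ.le
      _ = (t^pp / A t) ^ κ * τ ^ r2 := hrw2 t τ ht hτ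
  have hrpowII : ∀ (r : ℝ), -1 < r → ∀ x y : ℝ, IntervalIntegrable (fun τ : ℝ => τ ^ r) volume x y :=
    fun r hr x y => intervalIntegral.intervalIntegrable_rpow' hr
  have est1 : ∀ t T : ℝ, 0 < t → t ≤ T →
      (∫ τ in t..T, g τ) ≤ (t^pm / A t) ^ κ * ((T^β - t^β)/β) := by
    intro t T ht htT
    calc (∫ τ in t..T, g τ) ≤ ∫ τ in t..T, (t^pm / A t) ^ κ * τ ^ r1 := by
          apply intervalIntegral.integral_mono_on htT (hgII t T ht.le htT)
            ((hrpowII r1 hr1 t T).const_mul _)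
          intro τ hτ
          exact hup1 t τ ht hτ.1
      _ = (t^pm / A t) ^ κ * ∫ τ in t..T, τ ^ r1 := intervalIntegral.integral_const_mul _ _
      _ = (t^pm / A t) ^ κ * ((T^β - t^β)/β) := by
          rw [integral_rpow (Or.inl hr1), hr1β]
  have est2 : ∀ t : ℝ, 0 < t → (t^pm / A t) ^ κ * (t^β/β) ≤ G t := by
    intro t ht
    have h0 : (0:ℝ) ^ β = 0 := Real.zero_rpow hβ.ne'
    calc (t^pm / A t) ^ κ * (t^β/β) = (t^pm / A t) ^ κ * ((t^β - (0:ℝ)^β)/β) := by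
          rw [h0, sub_zero]
      _ = (t^pm / A t) ^ κ * ∫ τ in (0:ℝ)..t, τ ^ r1 := by
          rw [integral_rpow (Or.inl hr1), hr1β]
      _ = ∫ τ in (0:ℝ)..t, (t^pm / A t) ^ κ * τ ^ r1 :=
          (intervalIntegral.integral_const_mul _ _).symm
      _ ≤ ∫ τ in (0:ℝ)..t, g τ := by
          apply intervalIntegral.integral_mono_on ht.le
            ((hrpowII r1 hr1 0 t).const_mul _) (hgII 0 t le_rfl ht.le)
          intro τ hτ
          rcases hτ.1.eq_or_lt with h | h
          · have hr1ne : r1 ≠ 0 := by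
              have : r1 < 0 := mul_neg_of_neg_of_pos (by linarith) hκ
              exact this.ne
            rw [← h, Real.zero_rpow hr1ne, mul_zero, hg0]
          · exact hlow1 t τ ht h hτ.2
  have est3 : ∀ t T : ℝ, 0 < t → t ≤ T →
      (t^pp / A t) ^ κ * ((T^β' - t^β')/β') ≤ ∫ τ in t..T, g τ := by
    intro t T ht htT
    calc (t^pp / A t) ^ κ * ((T^β' - t^β')/β')
        = (t^pp / A t) ^ κ * ∫ τ in t..T, τ ^ r2 := by
          rw [integral_rpow (Or.inl hr2), hr2β]
      _ = ∫ τ in t..T, (t^pp / A t) ^ κ * τ ^ r2 :=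
          (intervalIntegral.integral_const_mul _ _).symm
      _ ≤ ∫ τ in t..T, g τ := by
          apply intervalIntegral.integral_mono_on htT
            ((hrpowII r2 hr2 t T).const_mul _) (hgII t T ht.le htT)
          intro τ hτ
          exact hup2 t τ ht hτ.1
  have est4 : ∀ t : ℝ, 0 < t → G t ≤ (t^pp / A t) ^ κ * (t^β'/β') := by
    intro t ht
    have h0 : (0:ℝ) ^ β' = 0 := Real.zero_rpow hβ'.ne'
    calc G t ≤ ∫ τ in (0:ℝ)..t, (t^pp / A t) ^ κ * τ ^ r2 := by
          apply intervalIntegral.integral_mono_on ht.le (hgII 0 t le_rfl ht.le)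
            ((hrpowII r2 hr2 0 t).const_mul _)
          intro τ hτ
          rcases hτ.1.eq_or_lt with h | h
          · have hr2ne : r2 ≠ 0 := by
              have : r2 < 0 := mul_neg_of_neg_of_pos (by linarith) hκ
              exact this.ne
            rw [← h, Real.zero_rpow hr2ne, mul_zero, hg0]
          · exact hlow2 t τ ht h hτ.2
      _ = (t^pp / A t) ^ κ * ∫ τ in (0:ℝ)..t, τ ^ r2 := intervalIntegral.integral_const_mul _ _
      _ = (t^pp / A t) ^ κ * (t^β'/β') := by
          rw [integral_rpow (Or.inl hr2), hr2β, h0, sub_zero]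
  -- T bounds
  set en : ℝ := (n:ℝ) / ((n:ℝ) - 1) with hendef
  have hen : 0 < en := by positivity
  have hTbound : ∀ t T lam : ℝ, 0 < t → t ≤ T → 1 ≤ lam → G T = lam ^ en * G t →
      lam ^ ((n:ℝ)/((n:ℝ)-pm)) * t ≤ T ∧ T ≤ lam ^ ((n:ℝ)/((n:ℝ)-pp)) * t := by
    intro t T lam ht htT hlam hGT
    have hlamen : 1 ≤ lam ^ en := Real.one_le_rpow hlam hen.le
    have hdiffG : (∫ τ in t..T, g τ) = (lam ^ en - 1) * G t := by
      have := hGdiff t T ht.le htT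
      rw [hGT] at this
      linarith
    have hT : 0 < T := lt_of_lt_of_le ht htT
    constructor
    · -- lower bound for T
      have h1 : (lam ^ en - 1) * ((t^pm / A t) ^ κ * (t^β/β)) ≤ (lam ^ en - 1) * G t :=
        mul_le_mul_of_nonneg_left (est2 t ht) (by linarith)
      have h2 := est1 t T ht htT
      rw [hdiffG] at h2
      have hc1 := hc1pos t ht
      have h3 : (lam ^ en - 1) * (t^β/β) ≤ (T^β - t^β)/β := by
        have h4 : (lam ^ en - 1) * ((t^pm / A t) ^ κ * (t^β/β))
            ≤ (t^pm / A t) ^ κ * ((T^β - t^β)/β) := le_trans h1 h2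
        rw [show (lam ^ en - 1) * ((t^pm / A t) ^ κ * (t^β/β))
            = (t^pm / A t) ^ κ * ((lam ^ en - 1) * (t^β/β)) by ring] at h4
        exact le_of_mul_le_mul_left h4 hc1
    -- T^β ≥ lam^en * t^β
      have h5 : lam ^ en * t ^ β ≤ T ^ β := by
        have h6 : (lam ^ en - 1) * t ^ β ≤ T ^ β - t ^ β := by
          have h := mul_le_mul_of_nonneg_right h3 hβ.le
          rw [div_mul_cancel₀ _ hβ.ne'] at h
          calc (lam ^ en - 1) * t ^ β = (lam ^ en - 1) * (t ^ β / β) * β := by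
                rw [mul_assoc, div_mul_cancel₀ _ hβ.ne']
            _ ≤ T ^ β - t ^ β := h
        nlinarith [h6]
      -- conclude T ≥ lam^(en/β) * t
      have h7 : (lam ^ en * t ^ β) ^ (1/β) ≤ (T ^ β) ^ (1/β) := by
        apply Real.rpow_le_rpow ?_ h5 (by positivity)
        have : (0:ℝ) < lam ^ en := Real.rpow_pos_of_pos (by linarith) _
        have : (0:ℝ) < t ^ β := Real.rpow_pos_of_pos ht _
        positivity
      have h8 : (T ^ β) ^ (1/β) = T := by
        rw [← Real.rpow_mul hT.le, mul_one_div, div_self hβ.ne', Real.rpow_one]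
      have h9 : (lam ^ en * t ^ β) ^ (1/β) = lam ^ (en/β) * t := by
        rw [Real.mul_rpow (Real.rpow_nonneg (by linarith) _) (Real.rpow_nonneg ht.le _),
          ← Real.rpow_mul (by linarith : (0:ℝ) ≤ lam), ← Real.rpow_mul ht.le,
          mul_one_div, mul_one_div, div_self hβ.ne', Real.rpow_one]
      rw [h8, h9] at h7
      have h10 : en/β = (n:ℝ)/((n:ℝ)-pm) := by
        rw [hendef, hβdef]
        field_simp
      rwa [h10] at h7
    · -- upper bound for T
      have h2 := est3 t T ht htT
      rw [hdiffG] at h2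
      have h1 : (lam ^ en - 1) * G t ≤ (lam ^ en - 1) * ((t^pp / A t) ^ κ * (t^β'/β')) :=
        mul_le_mul_of_nonneg_left (est4 t ht) (by linarith)
      have hc2 := hc2pos t ht
      have h3 : (T^β' - t^β')/β' ≤ (lam ^ en - 1) * (t^β'/β') := by
        have h4 : (t^pp / A t) ^ κ * ((T^β' - t^β')/β')
            ≤ (lam ^ en - 1) * ((t^pp / A t) ^ κ * (t^β'/β')) := le_trans h2 h1
        rw [show (lam ^ en - 1) * ((t^pp / A t) ^ κ * (t^β'/β'))
            = (t^pp / A t) ^ κ * ((lam ^ en - 1) * (t^β'/β')) by ring] at h4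
        exact le_of_mul_le_mul_left h4 hc2
      have h5 : T ^ β' ≤ lam ^ en * t ^ β' := by
        have h6 : T ^ β' - t ^ β' ≤ (lam ^ en - 1) * t ^ β' := by
          have h := mul_le_mul_of_nonneg_right h3 hβ'.le
          rw [div_mul_cancel₀ _ hβ'.ne'] at h
          calc T ^ β' - t ^ β' ≤ (lam ^ en - 1) * (t ^ β' / β') * β' := h
            _ = (lam ^ en - 1) * t ^ β' := by
                rw [mul_assoc, div_mul_cancel₀ _ hβ'.ne']
        nlinarith [h6]
      have h7 : (T ^ β') ^ (1/β') ≤ (lam ^ en * t ^ β') ^ (1/β') := by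
        apply Real.rpow_le_rpow (Real.rpow_nonneg hT.le _) h5 (by positivity)
      have h8 : (T ^ β') ^ (1/β') = T := by
        rw [← Real.rpow_mul hT.le, mul_one_div, div_self hβ'.ne', Real.rpow_one]
      have h9 : (lam ^ en * t ^ β') ^ (1/β') = lam ^ (en/β') * t := by
        rw [Real.mul_rpow (Real.rpow_nonneg (by linarith) _) (Real.rpow_nonneg ht.le _),
          ← Real.rpow_mul (by linarith : (0:ℝ) ≤ lam), ← Real.rpow_mul ht.le,
          mul_one_div, mul_one_div, div_self hβ'.ne', Real.rpow_one]
      rw [h8, h9] at h7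
      have h10 : en/β' = (n:ℝ)/((n:ℝ)-pp) := by
        rw [hendef, hβ'def]
        field_simp
      rwa [h10] at h7
  -- surjectivity of Hfun on [0,∞)
  obtain ⟨K, hK, hKni⟩ := hA2
  have hGconti : ∀ X : ℝ, 0 < X → ContinuousOn G (Icc 0 X) := by
    intro X hX
    have hI : IntegrableOn g (uIcc 0 X) volume := by
      rw [Set.uIcc_of_le hX.le, integrableOn_Icc_iff_integrableOn_Ioc]
      exact hInt X
    have := intervalIntegral.continuousOn_primitive_interval hI
    rw [Set.uIcc_of_le hX.le] at this
    exact this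
  have hGbig : ∀ R : ℝ, 0 < R → ∃ X : ℝ, 0 < X ∧ R ≤ G X := by
    intro R hR
    by_contra hcon
    push_neg at hcon
    apply hKni
    apply MeasureTheory.integrableOn_Ioi_of_intervalIntegral_norm_bounded R K
      (fun i : ℝ => (hInt i).mono_set (fun u hu => ⟨lt_trans hK hu.1, hu.2⟩)) tendsto_id
    filter_upwards [eventually_ge_atTop K] with i hi
    have hnorm : (∫ x in K..i, ‖g x‖) = ∫ x in K..i, g x := by
      apply intervalIntegral.integral_congr
      intro x hx
      rw [Set.uIcc_of_le hi] at hx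
      exact Real.norm_of_nonneg (hgnn x (le_trans hK.le hx.1))
    show (∫ x in K..i, ‖g x‖) ≤ R
    rw [hnorm]
    have hsum : G i = G K + ∫ x in K..i, g x := hGdiff K i hK.le hi
    have hGi : G i < R := hcon i (lt_of_lt_of_le hK hi)
    have hGK : 0 ≤ G K := (hGpos K hK).le
    linarith
  have hsurj : ∀ s : ℝ, 0 < s → ∃ t : ℝ, 0 < t ∧ Hfun A n t = s := by
    intro s hs
    set R := s ^ en with hRdef
    have hR : 0 < R := Real.rpow_pos_of_pos hs _
    obtain ⟨X, hX, hXR⟩ := hGbig R hR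
    have hIVT := intermediate_value_Icc hX.le (hGconti X hX)
    have hmem : R ∈ Icc (G 0) (G X) := by
      rw [hG0]; exact ⟨hR.le, hXR⟩
    obtain ⟨t, htmem, htR⟩ := hIVT hmem
    have htpos : 0 < t := by
      rcases htmem.1.eq_or_lt with h | h
      · exact absurd (by rw [← htR, ← h, hG0]) hR.ne
      · exact h
    refine ⟨t, htpos, ?_⟩
    rw [hHG t, htR, hRdef, ← Real.rpow_mul hs.le]
    have h1 : en * (((n:ℝ)-1)/(n:ℝ)) = 1 := by
      rw [hendef]; field_simp
    rw [h1, Real.rpow_one]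
  have hHinvpos : ∀ s : ℝ, 0 < s → 0 < Hinv s := by
    intro s hs
    obtain ⟨t, ht, hts⟩ := hsurj s hs
    rw [← hts, hHinv₁ t ht.le]
    exact ht
  refine ⟨hHinvpos, ?_⟩
  intro s hs lam hlam
  have hlam0 : (0:ℝ) ≤ lam := by linarith
  have hls : 0 < lam * s := mul_pos (lt_of_lt_of_le zero_lt_one hlam) hs
  set t := Hinv s with htdef
  set T := Hinv (lam * s) with hTdef
  have ht : 0 < t := hHinvpos s hs
  have hT : 0 < T := hHinvpos _ hls
  have hHt : Hfun A n t = s := hHinv₂ s hs.le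
  have hHT : Hfun A n T = lam * s := hHinv₂ _ hls.le
  have hGpow : ∀ u : ℝ, 0 < u → G u = (Hfun A n u) ^ en := by
    intro u hu
    rw [hHG u, ← Real.rpow_mul (hGpos u hu).le]
    have h1 : (((n:ℝ)-1)/(n:ℝ)) * en = 1 := by
      rw [hendef]; field_simp
    rw [h1, Real.rpow_one]
  have hGt : G t = s ^ en := by rw [hGpow t ht, hHt]
  have hGT : G T = (lam * s) ^ en := by rw [hGpow T hT, hHT]
  have hGTeq : G T = lam ^ en * G t := by
    rw [hGT, hGt, Real.mul_rpow hlam0 hs.le]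
  have htT : t ≤ T := by
    by_contra hc
    push_neg at hc
    have h1 := hHmono (mem_Ici.mpr hT.le) (mem_Ici.mpr ht.le) hc
    rw [hHt, hHT] at h1
    nlinarith
  obtain ⟨hlo, hup⟩ := hTbound t T lam ht htT hlam hGTeq
  have hsc := young_scale hA hpm0 hδ t T ht htT
  constructor
  · have h1 : lam ^ ((n:ℝ)/((n:ℝ)-pm)) ≤ T / t := by
      rw [le_div_iff₀ ht]; linarith [hlo]
    have h2 : (lam ^ ((n:ℝ)/((n:ℝ)-pm))) ^ pm ≤ (T/t) ^ pm :=
      Real.rpow_le_rpow (Real.rpow_nonneg hlam0 _) h1 hpm0.le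
    have h3 : (lam ^ ((n:ℝ)/((n:ℝ)-pm))) ^ pm = lam ^ ((n:ℝ)*pm/((n:ℝ)-pm)) := by
      rw [← Real.rpow_mul hlam0]
      congr 1
      ring
    calc lam ^ ((n:ℝ)*pm/((n:ℝ)-pm)) * A t ≤ (T/t) ^ pm * A t := by
          apply mul_le_mul_of_nonneg_right _ (hAnn t ht.le)
          rw [← h3]; exact h2
      _ = A t * (T/t) ^ pm := mul_comm _ _
      _ ≤ A T := hsc.2
  · have h1 : T / t ≤ lam ^ ((n:ℝ)/((n:ℝ)-pp)) := by
      rw [div_le_iff₀ ht]; linarith [hup]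
    have h2 : (T/t) ^ pp ≤ (lam ^ ((n:ℝ)/((n:ℝ)-pp))) ^ pp :=
      Real.rpow_le_rpow (by positivity) h1 hpp0.le
    have h3 : (lam ^ ((n:ℝ)/((n:ℝ)-pp))) ^ pp = lam ^ ((n:ℝ)*pp/((n:ℝ)-pp)) := by
      rw [← Real.rpow_mul hlam0]
      congr 1
      ring
    calc A T ≤ A t * (T/t) ^ pp := hsc.1
      _ = (T/t) ^ pp * A t := mul_comm _ _
      _ ≤ lam ^ ((n:ℝ)*pp/((n:ℝ)-pp)) * A t := by
          apply mul_le_mul_of_nonneg_right _ (hAnn t ht.le)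
          rw [← h3]; exact h2

/-- Lemma 4.6 (Lema 1): under the reverse Hölder inequality
`S ‖φ‖_{M_n,ν} ≤ ‖φ‖_{A_∞,μ}` for all nonnegative bounded Borel functions `φ`,
the measure `ν` is a countable sum of Dirac masses. -/
theorem measure_is_atomic (n : ℕ) (hn : 2 ≤ n) (a A : ℝ → ℝ) (pm pp : ℝ)
    (hA : IsYoungPair a A) (hpm : 1 < pm) (hpmpp : pm ≤ pp) (hppn : pp < n)
    (hpstar : pp < (n : ℝ) * pm / ((n : ℝ) - pm))
    (hδ : ∀ t, 0 < t → pm ≤ t * a t / A t ∧ t * a t / A t ≤ pp)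
    (hA2 : ∃ K : ℝ, 0 < K ∧
      ¬ IntegrableOn (fun t : ℝ => (t / A t) ^ ((1:ℝ) / ((n:ℝ) - 1))) (Set.Ioi K) volume)
    (hA3 : ∃ d : ℝ, 0 < d ∧
      IntegrableOn (fun t : ℝ => (t / A t) ^ ((1:ℝ) / ((n:ℝ) - 1))) (Set.Ioc 0 d) volume)
    (hHmono : StrictMonoOn (Hfun A n) (Set.Ici 0))
    (Hinv : ℝ → ℝ)
    (hHinv₁ : ∀ t, 0 ≤ t → Hinv (Hfun A n t) = t)
    (hHinv₂ : ∀ s, 0 ≤ s → Hfun A n (Hinv s) = s)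
    (ν μ : Measure (Fin n → ℝ)) [IsFiniteMeasure ν] [IsFiniteMeasure μ]
    (S : ℝ) (hS : 0 < S)
    (hrh : ∀ φ : (Fin n → ℝ) → ℝ, Measurable φ → (∀ x, 0 ≤ φ x) →
      (∃ Cb : ℝ, ∀ x, φ x ≤ Cb) →
      S * luxNorm (matus (fun s => A (Hinv s))) ν φ
        ≤ luxNorm (fun t => max (t ^ pp) (t ^ pm)) μ φ) :
    ∃ (s : Set (Fin n → ℝ)) (c : (Fin n → ℝ) → ℝ≥0∞),
      s.Countable ∧ (∀ x ∈ s, 0 < c x ∧ c x < ⊤) ∧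
      ν = Measure.sum (fun i : s => c i • Measure.dirac (i : Fin n → ℝ)) := by
  classical
  -- numeric facts
  have hn2 : (2:ℝ) ≤ (n:ℝ) := by exact_mod_cast hn
  have hpm0 : 0 < pm := lt_trans zero_lt_one hpm
  have hpp0 : 0 < pp := lt_of_lt_of_le hpm0 hpmpp
  have hpmn : pm < (n:ℝ) := lt_of_le_of_lt hpmpp hppn
  set q : ℝ := (n:ℝ) * pm / ((n:ℝ) - pm) with hqdef
  set Q : ℝ := (n:ℝ) * pp / ((n:ℝ) - pp) with hQdef
  have hqpos : 0 < q := by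
    apply div_pos (mul_pos (by linarith) hpm0) (by linarith)
  have hppq : pp < q := hpstar
  -- scaling of A_n
  obtain ⟨hHinvpos, hscale⟩ := An_scale n hn hA hpm hpmpp hppn hδ hA2 hA3 hHmono Hinv hHinv₁ hHinv₂
  have hAnpos : ∀ s : ℝ, 0 < s → 0 < A (Hinv s) := fun s hs => young_A_pos hA _ (hHinvpos s hs)
  obtain ⟨hBlow, hBupp⟩ := matus_bounds (fun s => A (Hinv s)) q Q hqpos hAnpos
    (fun s hs lam hlam => (hscale s hs lam hlam).1)
    (fun s hs lam hlam => (hscale s hs lam hlam).2)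
  have hB0 : matus (fun s => A (Hinv s)) 0 = 0 := by
    have hH0 : Hfun A n 0 = 0 := by
      unfold Hfun
      rw [intervalIntegral.integral_same]
      refine Real.zero_rpow ?_
      have hpos : (0:ℝ) < ((n:ℝ)-1)/(n:ℝ) := by
        apply div_pos <;> linarith
      exact hpos.ne'
    have hHi0 : Hinv 0 = 0 := by
      have := hHinv₁ 0 le_rfl
      rwa [hH0] at this
    unfold matus
    have heq : (fun s : ℝ => A (Hinv (s * 0)) / A (Hinv s)) = fun _ => (0:ℝ) := by
      funext s
      rw [mul_zero, hHi0, young_A_zero hA, zero_div]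
    rw [heq]
    exact limsup_const 0
  -- the atom set
  set D : Set (Fin n → ℝ) := {x | ν {x} ≠ 0} with hDdef
  have hDc : D.Countable := by
    have h := MeasureTheory.Measure.countable_meas_pos_of_disjoint_iUnion
      (μ := ν) (As := fun x : (Fin n → ℝ) => {x})
      (fun x => measurableSet_singleton x) ?_
    · refine h.mono ?_
      intro x hx
      exact pos_iff_ne_zero.mpr hx
    · intro x y hxy
      simp [Function.onFun, hxy]
  have hDm : MeasurableSet D := hDc.measurableSet
  -- key inequality
  have hkey : ∀ E : Set (Fin n → ℝ), MeasurableSet E → (ν E).toReal ≤ 1 →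
      S * ((ν E).toReal) ^ (1/q) ≤ 1 → 0 < (ν E).toReal →
      (S * ((ν E).toReal) ^ (1/q)) ^ pp ≤ (μ E).toReal := by
    intro E hE hm1 hSb hm0
    set φ : (Fin n → ℝ) → ℝ := E.indicator (fun _ => 1) with hφdef
    have hφmeas : Measurable φ := measurable_const.indicator hE
    have hφnn : ∀ x, 0 ≤ φ x := fun x => Set.indicator_nonneg (fun _ _ => zero_le_one) x
    have hφbd : ∃ Cb : ℝ, ∀ x, φ x ≤ Cb := by
      refine ⟨1, fun x => ?_⟩
      by_cases hx : x ∈ E <;> simp [hφdef, Set.indicator_of_mem, Set.indicator_of_notMem, hx]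
    have hRH := hrh φ hφmeas hφnn hφbd
    have hlow := luxNorm_indicator_lower ν (matus (fun s => A (Hinv s))) q hqpos hB0
      hBlow hBupp hE hm1
    have h1 : S * ((ν E).toReal) ^ (1/q) ≤ luxNorm (fun t => max (t^pp) (t^pm)) μ φ :=
      le_trans (mul_le_mul_of_nonneg_left hlow hS.le) hRH
    have hM0 : 0 < (μ E).toReal := by
      by_contra hM
      push_neg at hM
      have hMz : (μ E).toReal = 0 := le_antisymm hM ENNReal.toReal_nonneg
      rw [show φ = E.indicator (fun _ => (1:ℝ)) from rfl,
        luxNorm_indicator_upper_zero μ pp pm hpm0 hpp0 hE hMz] at h1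
      have hx : 0 < S * ((ν E).toReal) ^ (1/q) := mul_pos hS (Real.rpow_pos_of_pos hm0 _)
      linarith
    have hupp := luxNorm_indicator_upper_pos μ pp pm hpm0 hpp0 hE hM0
    have h2 : S * ((ν E).toReal) ^ (1/q)
        ≤ max (((μ E).toReal) ^ (1/pp)) (((μ E).toReal) ^ (1/pm)) := le_trans h1 hupp
    set b := S * ((ν E).toReal) ^ (1/q) with hbdef
    have hbpos : 0 < b := mul_pos hS (Real.rpow_pos_of_pos hm0 _)
    set M := (μ E).toReal with hMdef
    rcases le_max_iff.mp h2 with h | h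
    · calc b ^ pp ≤ (M ^ (1/pp)) ^ pp := Real.rpow_le_rpow hbpos.le h hpp0.le
        _ = M := by
            rw [← Real.rpow_mul hM0.le, one_div, inv_mul_cancel₀ hpp0.ne', Real.rpow_one]
    · calc b ^ pp ≤ b ^ pm := Real.rpow_le_rpow_of_exponent_ge hbpos hSb hpmpp
        _ ≤ (M ^ (1/pm)) ^ pm := Real.rpow_le_rpow hbpos.le h hpm0.le
        _ = M := by
            rw [← Real.rpow_mul hM0.le, one_div, inv_mul_cancel₀ hpm0.ne', Real.rpow_one]
  -- the continuous part vanishes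
  have hnull : ν Dᶜ = 0 := by
    by_contra hν0
    set ρ := ν.restrict Dᶜ with hρdef
    have hρinst : IsFiniteMeasure ρ := by
      rw [hρdef]; infer_instance
    have hna : NullSingletonClass ρ := by
      refine ⟨fun x => ?_⟩
      rw [hρdef, Measure.restrict_apply (measurableSet_singleton x)]
      by_cases hx : x ∈ D
      · have : ({x} : Set (Fin n → ℝ)) ∩ Dᶜ = ∅ := by
          ext y; simp only [Set.mem_inter_iff, Set.mem_singleton_iff, Set.mem_compl_iff,
            Set.mem_empty_iff_false, iff_false]
          rintro ⟨rfl, hy⟩; exact hy hx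
        rw [this, measure_empty]
      · have hsub : ({x} : Set (Fin n → ℝ)) ∩ Dᶜ ⊆ {x} := Set.inter_subset_left
        have hx0 : ν {x} = 0 := by
          by_contra hc; exact hx hc
        exact measure_mono_null hsub hx0
    have hmuniv : ρ Set.univ ≠ 0 := by
      rw [hρdef, Measure.restrict_apply MeasurableSet.univ, Set.univ_inter]; exact hν0
    set mR := (ρ Set.univ).toReal with hmRdef
    have hmR : 0 < mR := ENNReal.toReal_pos hmuniv (measure_ne_top _ _)
    set θ : ℝ := pp / q with hθdef
    have hθpos : 0 < θ := div_pos hpp0 hqpos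
    have hθ1 : θ < 1 := by
      rw [hθdef, div_lt_one hqpos]; exact hppq
    set W : ℝ := max (S ^ (-pp) * (((μ Set.univ).toReal + 1)/mR)) 1 with hWdef
    have hW1 : (1:ℝ) ≤ W := le_max_right _ _
    have hWpos : 0 < W := lt_of_lt_of_le zero_lt_one hW1
    set εR : ℝ := min (min 1 ((1/S) ^ q)) (W ^ (1/(θ-1))) with hεdef
    have hεpos : 0 < εR := by
      apply lt_min (lt_min zero_lt_one (Real.rpow_pos_of_pos (by positivity) _))
        (Real.rpow_pos_of_pos hWpos _)
    have hε1 : εR ≤ 1 := le_trans (min_le_left _ _) (min_le_left _ _)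
    obtain ⟨F, hFm, hFd, hFU, hFε⟩ := cover_small ρ (ENNReal.ofReal_pos.mpr hεpos)
    set c' : ℝ≥0∞ := ENNReal.ofReal (S ^ pp * εR ^ (θ-1)) with hc'def
    have hconst_pos : 0 < S ^ pp * εR ^ (θ-1) :=
      mul_pos (Real.rpow_pos_of_pos hS _) (Real.rpow_pos_of_pos hεpos _)
    have hmain : ∀ i : ℕ, c' * ρ (F i) ≤ μ (F i ∩ Dᶜ) := by
      intro i
      by_cases h0 : ρ (F i) = 0
      · rw [h0, mul_zero]; exact zero_le
      · have hEim : MeasurableSet (F i ∩ Dᶜ) := (hFm i).inter hDm.compl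
        have hρFi : ρ (F i) = ν (F i ∩ Dᶜ) := by
          rw [hρdef, Measure.restrict_apply (hFm i)]
        set mi := (ν (F i ∩ Dᶜ)).toReal with hmidef
        have hmi0 : 0 < mi := by
          apply ENNReal.toReal_pos _ (measure_ne_top _ _)
          rw [← hρFi]; exact h0
        have hmiε : mi ≤ εR := by
          apply ENNReal.toReal_le_of_le_ofReal hεpos.le
          rw [← hρFi]; exact hFε i
        have hmi1 : mi ≤ 1 := le_trans hmiε hε1
        have hSb : S * mi ^ (1/q) ≤ 1 := by
          have h1 : mi ^ (1/q) ≤ ((1/S) ^ q) ^ (1/q) := by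
            apply Real.rpow_le_rpow hmi0.le _ (by positivity)
            exact le_trans hmiε (le_trans (min_le_left _ _) (min_le_right _ _))
          have h2 : ((1/S:ℝ) ^ q) ^ (1/q) = 1/S := by
            rw [← Real.rpow_mul (by positivity), mul_one_div, div_self hqpos.ne',
              Real.rpow_one]
          rw [h2] at h1
          calc S * mi ^ (1/q) ≤ S * (1/S) := mul_le_mul_of_nonneg_left h1 hS.le
            _ = 1 := by field_simp
        have hk := hkey (F i ∩ Dᶜ) hEim hmi1 hSb hmi0
        -- lower bound for (S mi^{1/q})^pp
        have heq1 : (S * mi ^ (1/q)) ^ pp = S ^ pp * mi ^ θ := by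
          rw [Real.mul_rpow hS.le (Real.rpow_nonneg hmi0.le _),
            ← Real.rpow_mul hmi0.le, one_div, hθdef]
          congr 2
          rw [inv_mul_eq_div]
        have heq2 : mi ^ θ = mi ^ (θ-1) * mi := by
          rw [← Real.rpow_add_one hmi0.ne' (θ-1), sub_add_cancel]
        have hge : εR ^ (θ-1) ≤ mi ^ (θ-1) :=
          Real.rpow_le_rpow_of_nonpos hmi0 hmiε (by linarith)
        have hfinal : S ^ pp * εR ^ (θ-1) * mi ≤ (μ (F i ∩ Dᶜ)).toReal := by
          calc S ^ pp * εR ^ (θ-1) * mi ≤ S ^ pp * mi ^ (θ-1) * mi := by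
                have hSpp : (0:ℝ) ≤ S ^ pp := (Real.rpow_pos_of_pos hS pp).le
                exact mul_le_mul_of_nonneg_right
                  (mul_le_mul_of_nonneg_left hge hSpp) hmi0.le
            _ = S ^ pp * mi ^ θ := by rw [heq2]; ring
            _ = (S * mi ^ (1/q)) ^ pp := heq1.symm
            _ ≤ (μ (F i ∩ Dᶜ)).toReal := hk
        calc c' * ρ (F i) = ENNReal.ofReal (S ^ pp * εR ^ (θ-1) * mi) := by
              rw [hc'def, ENNReal.ofReal_mul hconst_pos.le]
              congr 1
              rw [hρFi, hmidef, ENNReal.ofReal_toReal (measure_ne_top _ _)]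
          _ ≤ ENNReal.ofReal ((μ (F i ∩ Dᶜ)).toReal) := ENNReal.ofReal_le_ofReal hfinal
          _ = μ (F i ∩ Dᶜ) := ENNReal.ofReal_toReal (measure_ne_top _ _)
    -- sum up
    have hsum : c' * ρ Set.univ ≤ μ Set.univ := by
      have h1 : ρ Set.univ = ∑' i, ρ (F i) := by
        rw [← hFU, measure_iUnion hFd hFm]
      have h2 : (∑' i, μ (F i ∩ Dᶜ)) = μ (⋃ i, F i ∩ Dᶜ) := by
        rw [measure_iUnion ?_ (fun i => (hFm i).inter hDm.compl)]
        intro i j hij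
        exact ((hFd hij).mono Set.inter_subset_left Set.inter_subset_left)
      calc c' * ρ Set.univ = ∑' i, c' * ρ (F i) := by
            rw [h1, ENNReal.tsum_mul_left]
        _ ≤ ∑' i, μ (F i ∩ Dᶜ) := ENNReal.tsum_le_tsum hmain
        _ = μ (⋃ i, F i ∩ Dᶜ) := h2
        _ ≤ μ Set.univ := measure_mono (Set.subset_univ _)
    -- contradiction
    have hW2 : W ≤ εR ^ (θ-1) := by
      have h1 : εR ≤ W ^ (1/(θ-1)) := min_le_right _ _
      have h2 : (W ^ (1/(θ-1))) ^ (θ-1) ≤ εR ^ (θ-1) :=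
        Real.rpow_le_rpow_of_nonpos hεpos h1 (by linarith)
      rwa [← Real.rpow_mul hWpos.le, one_div, inv_mul_cancel₀ (by linarith : θ-1 ≠ 0),
        Real.rpow_one] at h2
    have hbig : (μ Set.univ).toReal + 1 ≤ S ^ pp * εR ^ (θ-1) * mR := by
      have h1 : S ^ (-pp) * (((μ Set.univ).toReal + 1)/mR) ≤ W := le_max_left _ _
      have hSpp : (0:ℝ) < S ^ pp := Real.rpow_pos_of_pos hS _
      have hSnp : (0:ℝ) < S ^ (-pp) := Real.rpow_pos_of_pos hS _
      have hSS : S ^ pp * S ^ (-pp) = 1 := by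
        rw [← Real.rpow_add hS, add_neg_cancel, Real.rpow_zero]
      calc (μ Set.univ).toReal + 1
          = S ^ pp * (S ^ (-pp) * (((μ Set.univ).toReal + 1)/mR)) * mR := by
            rw [show S ^ pp * (S ^ (-pp) * (((μ Set.univ).toReal + 1)/mR)) * mR
              = (S ^ pp * S ^ (-pp)) * ((((μ Set.univ).toReal + 1)/mR) * mR) from by ring,
              hSS, div_mul_cancel₀ _ hmR.ne', one_mul]
        _ ≤ S ^ pp * W * mR := by
            have := mul_le_mul_of_nonneg_left h1 hSpp.le
            exact mul_le_mul_of_nonneg_right this hmR.le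
        _ ≤ S ^ pp * εR ^ (θ-1) * mR := by
            have := mul_le_mul_of_nonneg_left hW2 hSpp.le
            exact mul_le_mul_of_nonneg_right this hmR.le
    have hlt : μ Set.univ < c' * ρ Set.univ := by
      have h1 : μ Set.univ = ENNReal.ofReal ((μ Set.univ).toReal) :=
        (ENNReal.ofReal_toReal (measure_ne_top _ _)).symm
      have h2 : c' * ρ Set.univ = ENNReal.ofReal (S ^ pp * εR ^ (θ-1) * mR) := by
        rw [hc'def, ENNReal.ofReal_mul hconst_pos.le]
        congr 1
        rw [hmRdef, ENNReal.ofReal_toReal (measure_ne_top _ _)]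
      rw [h1, h2]
      apply ENNReal.ofReal_lt_ofReal_iff_of_nonneg ENNReal.toReal_nonneg |>.mpr
      linarith
    exact absurd hsum (not_le.mpr hlt)
  -- conclude
  refine ⟨D, fun x => ν {x}, hDc, ?_, ?_⟩
  · intro x hx
    exact ⟨pos_iff_ne_zero.mpr hx, measure_lt_top ν {x}⟩
  · exact repr_lemma ν D hDm hDc hnull
end
end
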